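/- arXiv:0806.2582 — 4 statements merged into one kernel-verified Lean document; each statement's English description precedes it below -/
import Mathlib

section
/- Suppose a ∈ (-∞, 0) is finite. Then the Luxemburg norm N_û and the essential-supremum norm are equivalent on L^∞(P): for every f ∈ L^∞(P) one has ‖f‖_∞ ≤ (-a)·N_û(f), and there exists a constant k > 0, independent of f, such that k·N_û(f) ≤ ‖f‖_∞ for every f ∈ L^∞(P). -/
/-!
Concavity of `u` on `(a, ∞)` bounds `u(0) - u(-s)` by the chord between `-x` and `0`, so
`û(y) ≤ (|y| / x) · û(x)` and `û ≤ 1` on some interval `[-r, r]`: every `c > ‖f‖_∞ / r` is then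
admissible in the Luxemburg infimum. Conversely `u = -∞` on `(-∞, a)` makes `û = ∞` beyond `-a`,
so an admissible `c` forces `|f| ≤ -a · c` almost everywhere.
-/

open MeasureTheory Filter Set Topology
open scoped ENNReal

noncomputable section

/-- The positive part of an extended real number, as an element of `ℝ≥0∞`. -/
def EReal.toENN (x : EReal) : ℝ≥0∞ := if x = ⊤ then ⊤ else ENNReal.ofReal x.toReal

theorem EReal.toENN_coe (x : ℝ) : (x : EReal).toENN = ENNReal.ofReal x := by
  rw [EReal.toENN, if_neg (EReal.coe_ne_top x), EReal.toReal_coe]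

section Luxemburg

variable {Ω : Type*} [MeasurableSpace Ω] {P : Measure Ω} {Φ : ℝ → ℝ≥0∞} {f : Ω → ℝ}

variable (P Φ f) in
def luxemburgSet : Set ℝ := {c | 0 < c ∧ ∫⁻ ω, Φ (f ω / c) ∂P ≤ 1}

variable (P Φ f) in
def luxemburgNorm : ℝ := sInf (luxemburgSet P Φ f)

theorem bddBelow_luxemburgSet : BddBelow (luxemburgSet P Φ f) :=
  ⟨0, fun _ hc => hc.1.le⟩

theorem MeasureTheory.MemLp.ae_abs_le_eLpNorm_top (hf : MemLp f ⊤ P) :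
    ∀ᵐ ω ∂P, |f ω| ≤ (eLpNorm f ⊤ P).toReal := by
  have hfin : eLpNormEssSup f P ≠ ⊤ := eLpNorm_exponent_top (f := f) ▸ hf.2.ne
  filter_upwards [ae_le_eLpNormEssSup (f := f) (μ := P)] with ω hω
  simpa [eLpNorm_exponent_top] using ENNReal.toReal_mono hfin hω

theorem mem_luxemburgSet_of_eLpNorm_le [IsProbabilityMeasure P] {r c : ℝ}
    (hΦ : ∀ y, |y| ≤ r → Φ y ≤ 1) (hf : MemLp f ⊤ P) (hc : 0 < c)
    (hfc : (eLpNorm f ⊤ P).toReal ≤ r * c) : c ∈ luxemburgSet P Φ f := by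
  refine ⟨hc, ?_⟩
  have hle : ∀ᵐ ω ∂P, Φ (f ω / c) ≤ 1 := by
    filter_upwards [hf.ae_abs_le_eLpNorm_top] with ω hω
    refine hΦ _ ?_
    rw [abs_div, abs_of_pos hc, div_le_iff₀ hc]
    exact hω.trans hfc
  simpa using lintegral_mono_ae hle

theorem mul_luxemburgNorm_le_eLpNorm [IsProbabilityMeasure P] {r : ℝ} (hr : 0 < r)
    (hΦ : ∀ y, |y| ≤ r → Φ y ≤ 1) (hf : MemLp f ⊤ P) :
    r * luxemburgNorm P Φ f ≤ (eLpNorm f ⊤ P).toReal := by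
  set B := (eLpNorm f ⊤ P).toReal
  have hsub : Ioi (B / r) ⊆ luxemburgSet P Φ f := fun c hc =>
    mem_luxemburgSet_of_eLpNorm_le hΦ hf (lt_of_le_of_lt (by positivity) hc)
      ((div_lt_iff₀' hr).1 hc).le
  have hle : luxemburgNorm P Φ f ≤ B / r :=
    (csInf_le_csInf bddBelow_luxemburgSet nonempty_Ioi hsub).trans_eq csInf_Ioi
  exact (le_div_iff₀' hr).1 hle

theorem luxemburgSet_nonempty [IsProbabilityMeasure P] {r : ℝ} (hr : 0 < r)
    (hΦ : ∀ y, |y| ≤ r → Φ y ≤ 1) (hf : MemLp f ⊤ P) : (luxemburgSet P Φ f).Nonempty := by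
  have hB : 0 ≤ (eLpNorm f ⊤ P).toReal := ENNReal.toReal_nonneg
  refine ⟨(eLpNorm f ⊤ P).toReal / r + 1, mem_luxemburgSet_of_eLpNorm_le hΦ hf (by positivity) ?_⟩
  rw [mul_add, mul_div_cancel₀ _ hr.ne']
  linarith

theorem ae_abs_le_of_lintegral_ne_top {R : ℝ} (hΦ : ∀ y, R < |y| → Φ y = ⊤)
    {g : Ω → ℝ} (hg : AEMeasurable g P) (h : ∫⁻ ω, Φ (g ω) ∂P ≠ ⊤) :
    ∀ᵐ ω ∂P, |g ω| ≤ R := by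
  simp_rw [ae_iff, not_le]
  by_contra hpos
  refine h (top_unique ?_)
  calc ⊤ = ∫⁻ ω, {ω | R < |g ω|}.indicator (fun _ => ⊤) ω ∂P := by
        rw [lintegral_indicator_const₀ (nullMeasurableSet_lt aemeasurable_const hg.abs),
          ENNReal.top_mul hpos]
    _ ≤ ∫⁻ ω, Φ (g ω) ∂P := lintegral_mono fun ω => by
        by_cases hω : R < |g ω|
        · simp [hω, hΦ _ hω]
        · simp [hω]

theorem eLpNorm_le_mul_luxemburgNorm {R : ℝ} (hR : 0 < R) (hΦ : ∀ y, R < |y| → Φ y = ⊤)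
    (hf : AEMeasurable f P) (hne : (luxemburgSet P Φ f).Nonempty) :
    (eLpNorm f ⊤ P).toReal ≤ R * luxemburgNorm P Φ f := by
  refine (div_le_iff₀' hR).1 (le_csInf hne fun c ⟨hc, hint⟩ => (div_le_iff₀' hR).2 ?_)
  have hbound : ∀ᵐ ω ∂P, ‖f ω‖ ≤ R * c := by
    filter_upwards [ae_abs_le_of_lintegral_ne_top hΦ (hf.div_const c)
      (ne_top_of_le_ne_top ENNReal.one_ne_top hint)] with ω hω
    rwa [Real.norm_eq_abs, ← div_le_iff₀ hc, ← abs_of_pos hc, ← abs_div]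
  refine ENNReal.toReal_le_of_le_ofReal (by positivity) ?_
  simpa using eLpNorm_le_of_ae_bound (p := ⊤) hbound

end Luxemburg

section YoungFunction

variable {a : ℝ} {u : ℝ → EReal}

def youngFunction (u : ℝ → EReal) (x : ℝ) : ℝ≥0∞ := (u 0 - u (-|x|)).toENN

theorem youngFunction_eq_top (hu0 : u 0 ≠ ⊥) (hu_bot : ∀ x : ℝ, x < a → u x = ⊥) {y : ℝ}
    (hy : -a < |y|) : youngFunction u y = ⊤ := by
  rw [youngFunction, hu_bot (-|y|) (by linarith), EReal.sub_bot hu0]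
  rfl

theorem youngFunction_le_of_abs_le (hu_ne_top : ∀ x : ℝ, u x ≠ ⊤)
    (hu_fin : ∀ x : ℝ, a < x → u x ≠ ⊥)
    (hu_conc : ∀ x y t : ℝ, a < x → a < y → 0 ≤ t → t ≤ 1 →
      ((t * (u x).toReal + (1 - t) * (u y).toReal : ℝ) : EReal) ≤ u (t * x + (1 - t) * y))
    {x y : ℝ} (hx : 0 < x) (hax : a < -x) (hy : |y| ≤ x) :
    youngFunction u y ≤ ENNReal.ofReal (|y| / x * ((u 0).toReal - (u (-x)).toReal)) := by
  have hconc := hu_conc (-x) 0 (|y| / x) hax (by linarith) (by positivity) ((div_le_one hx).2 hy)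
  have harg : |y| / x * -x + (1 - |y| / x) * 0 = -|y| := by
    rw [mul_zero, add_zero, mul_neg, div_mul_cancel₀ _ hx.ne']
  have hu0 := EReal.coe_toReal (hu_ne_top 0) (hu_fin 0 (by linarith))
  have huy := EReal.coe_toReal (hu_ne_top (-|y|)) (hu_fin _ (by linarith))
  rw [harg, ← huy, EReal.coe_le_coe_iff] at hconc
  have hdiff : u 0 - u (-|y|) = ((u 0).toReal - (u (-|y|)).toReal : ℝ) := by
    rw [EReal.coe_sub, hu0, huy]
  rw [youngFunction, hdiff, EReal.toENN_coe]
  exact ENNReal.ofReal_le_ofReal (by linarith)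

theorem exists_pos_youngFunction_le_one (ha : a < 0) (hu_ne_top : ∀ x : ℝ, u x ≠ ⊤)
    (hu_fin : ∀ x : ℝ, a < x → u x ≠ ⊥)
    (hu_conc : ∀ x y t : ℝ, a < x → a < y → 0 ≤ t → t ≤ 1 →
      ((t * (u x).toReal + (1 - t) * (u y).toReal : ℝ) : EReal) ≤ u (t * x + (1 - t) * y)) :
    ∃ r > 0, ∀ y : ℝ, |y| ≤ r → youngFunction u y ≤ 1 := by
  obtain ⟨x, hx, hax⟩ : ∃ x, 0 < x ∧ a < -x := ⟨-a / 2, by linarith, by linarith⟩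
  set M := (u 0).toReal - (u (-x)).toReal
  refine ⟨x / (|M| + 1), by positivity, fun y hy => ?_⟩
  rw [le_div_iff₀ (by positivity)] at hy
  have hyx : |y| ≤ x := by nlinarith [abs_nonneg y, abs_nonneg M]
  refine (youngFunction_le_of_abs_le hu_ne_top hu_fin hu_conc hx hax hyx).trans
    (ENNReal.ofReal_le_one.2 ?_)
  rw [div_mul_eq_mul_div, div_le_one hx]
  nlinarith [abs_nonneg y, le_abs_self M]

end YoungFunction

theorem statement0_general
    {Ω : Type*} [MeasurableSpace Ω] (P : Measure Ω) [IsProbabilityMeasure P]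
    (a : ℝ) (ha : a < 0)
    (u : ℝ → EReal)
    (hu_ne_top : ∀ x : ℝ, u x ≠ ⊤)
    (hu_bot : ∀ x : ℝ, x < a → u x = ⊥)
    (hu_fin : ∀ x : ℝ, a < x → u x ≠ ⊥)
    (hu_conc : ∀ x y t : ℝ, a < x → a < y → 0 ≤ t → t ≤ 1 →
      ((t * (u x).toReal + (1 - t) * (u y).toReal : ℝ) : EReal) ≤ u (t * x + (1 - t) * y))
    -- the Young function `û(x) = -u(-|x|) + u(0)`
    (uhat : ℝ → ℝ≥0∞)
    (huhat : ∀ x : ℝ, uhat x = (u 0 - u (-|x|)).toENN)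
    -- the Luxemburg norm
    (Nu : (Ω → ℝ) → ℝ)
    (hNu : ∀ f : Ω → ℝ, Nu f = sInf {c : ℝ | 0 < c ∧ ∫⁻ ω, uhat (f ω / c) ∂P ≤ 1}) :
    (∀ f : Ω → ℝ, MemLp f ⊤ P → (eLpNorm f ⊤ P).toReal ≤ (-a) * Nu f) ∧
    ∃ k : ℝ, 0 < k ∧ ∀ f : Ω → ℝ, MemLp f ⊤ P →
      k * Nu f ≤ (eLpNorm f ⊤ P).toReal := by
  obtain rfl : uhat = youngFunction u := funext huhat
  obtain rfl : Nu = luxemburgNorm P (youngFunction u) := funext hNu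
  obtain ⟨r, hr, hr_le_one⟩ := exists_pos_youngFunction_le_one ha hu_ne_top hu_fin hu_conc
  refine ⟨fun f hf => ?_, r, hr, fun f hf => mul_luxemburgNorm_le_eLpNorm hr hr_le_one hf⟩
  exact eLpNorm_le_mul_luxemburgNorm (neg_pos.2 ha)
    (fun y hy => youngFunction_eq_top (hu_fin 0 ha) hu_bot hy) hf.1.aemeasurable
    (luxemburgSet_nonempty hr hr_le_one hf)

/-- Lemma 8 of Biagini–Frittelli.  For a finite `a < 0`, the Luxemburg norm
`N_û` and the essential-supremum norm are equivalent on `L^∞(P)`: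
`‖f‖_∞ ≤ (-a) · N_û(f)` for every `f ∈ L^∞(P)`, and there is a constant `k > 0`, independent
of `f`, with `k · N_û(f) ≤ ‖f‖_∞` for every `f ∈ L^∞(P)`. -/
theorem statement0
    {Ω : Type*} [MeasurableSpace Ω] (P : Measure Ω) [IsProbabilityMeasure P]
    (a : ℝ) (ha : a < 0)
    (u : ℝ → EReal)
    (hu_ne_top : ∀ x : ℝ, u x ≠ ⊤)
    (hu_bot : ∀ x : ℝ, x < a → u x = ⊥)
    (hu_fin : ∀ x : ℝ, a < x → u x ≠ ⊥)
    (hu_mono : Monotone u)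
    (hu_conc : ∀ x y t : ℝ, a < x → a < y → 0 ≤ t → t ≤ 1 →
      ((t * (u x).toReal + (1 - t) * (u y).toReal : ℝ) : EReal) ≤ u (t * x + (1 - t) * y))
    -- the Young function `û(x) = -u(-|x|) + u(0)`
    (uhat : ℝ → ℝ≥0∞)
    (huhat : ∀ x : ℝ, uhat x = (u 0 - u (-|x|)).toENN)
    -- the Luxemburg norm
    (Nu : (Ω → ℝ) → ℝ)
    (hNu : ∀ f : Ω → ℝ, Nu f = sInf {c : ℝ | 0 < c ∧ ∫⁻ ω, uhat (f ω / c) ∂P ≤ 1}) :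
    (∀ f : Ω → ℝ, MemLp f ⊤ P → (eLpNorm f ⊤ P).toReal ≤ (-a) * Nu f) ∧
    ∃ k : ℝ, 0 < k ∧ ∀ f : Ω → ℝ, MemLp f ⊤ P →
      k * Nu f ≤ (eLpNorm f ⊤ P).toReal :=
  statement0_general P a ha u hu_ne_top hu_bot hu_fin hu_conc uhat huhat Nu hNu
end
end

section
/- Let β := D⁻u(0) ∈ [0, ∞) be the left derivative of u at 0 (which exists and is finite by concavity, since 0 lies in the interior (a, ∞) of the effective domain of u). Then Φ(β) = u(0), and the convex conjugate Φ̂ of û admits the representation: Φ̂(y) = 0 if |y| ≤ β, and Φ̂(y) = Φ(|y|) - Φ(β) if |y| > β. -/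
open MeasureTheory Filter Set Topology
open scoped ENNReal

noncomputable section

lemma EReal.toENN_eq_toENNReal : EReal.toENN = EReal.toENNReal := rfl

namespace ConcaveOn

variable {S : Set ℝ} {f : ℝ → ℝ} {x y f' : ℝ}

lemma differentiableWithinAt_Iio_of_mem_interior (hfc : ConcaveOn ℝ S f) (hx : x ∈ interior S) :
    DifferentiableWithinAt ℝ f (Iio x) x := by
  simpa using (hfc.neg.differentiableWithinAt_Iio_of_mem_interior hx).neg

lemma slope_le_of_hasDerivWithinAt_Iio_of_mem_interior (hfc : ConcaveOn ℝ S f)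
    (hx : x ∈ interior S) (hy : y ∈ S) (hxy : x < y) (hf' : HasDerivWithinAt f f' (Iio x) x) :
    slope f x y ≤ f' := by
  refine ge_of_tendsto ((hasDerivWithinAt_iff_tendsto_slope' self_notMem_Iio).mp hf') ?_
  filter_upwards [nhdsWithin_le_nhds (mem_interior_iff_mem_nhds.1 hx), self_mem_nhdsWithin]
    with z hzS (hzx : z < x)
  exact hfc.slope_anti (interior_subset hx) ⟨hzS, hzx.ne⟩ ⟨hy, hxy.ne'⟩ (hzx.trans hxy).le

lemma le_add_mul_sub_of_hasDerivWithinAt_Iio (hfc : ConcaveOn ℝ S f) (hx : x ∈ interior S)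
    (hf' : HasDerivWithinAt f f' (Iio x) x) (hy : y ∈ S) :
    f y ≤ f x + f' * (y - x) := by
  rcases lt_trichotomy y x with hyx | rfl | hxy
  · have h := hfc.le_slope_of_hasDerivWithinAt_Iio hy (interior_subset hx) hyx hf'
    rw [slope_def_field, le_div_iff₀ (sub_pos.2 hyx)] at h
    linarith
  · simp
  · have h := hfc.slope_le_of_hasDerivWithinAt_Iio_of_mem_interior hx hy hxy hf'
    rw [slope_def_field, div_le_iff₀ (sub_pos.2 hxy)] at h
    linarith

end ConcaveOn

lemma EReal.ofReal_sub_toENNReal_coe_sub {v : EReal} {r : ℝ} (hv : v ≤ r) (p : ℝ) :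
    ENNReal.ofReal p - ((r : EReal) - v).toENNReal = (v + p - r).toENNReal := by
  rw [← EReal.real_coe_toENNReal, ← EReal.toENNReal_sub
    ((EReal.sub_nonneg (.inl (EReal.coe_ne_top r)) (.inl (EReal.coe_ne_bot r))).2 hv)]
  congr 1
  induction v with
  | bot => simp
  | top => simp at hv
  | coe w => norm_cast; ring

def utilityConjugate (u : ℝ → EReal) (y : ℝ) : EReal := ⨆ x : ℝ, (u x - ((x * y : ℝ) : EReal))

def youngConjugate (u : ℝ → EReal) (y : ℝ) : ℝ≥0∞ :=
  ⨆ x : ℝ, (ENNReal.ofReal (x * y) - (u 0 - u (-|x|)).toENNReal)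

section Utility

variable {a : EReal} {u : ℝ → EReal}

lemma zero_mem_interior_setOf_lt_coe (ha : a < 0) : (0 : ℝ) ∈ interior {x : ℝ | a < x} := by
  rwa [(isOpen_lt continuous_const continuous_coe_real_ereal).interior_eq]

lemma concaveOn_toReal (hu_ne_top : ∀ x : ℝ, u x ≠ ⊤)
    (hu_conc : ∀ x y t : ℝ, a < (x : EReal) → a < (y : EReal) → 0 ≤ t → t ≤ 1 →
      ((t * (u x).toReal + (1 - t) * (u y).toReal : ℝ) : EReal) ≤ u (t * x + (1 - t) * y)) :
    ConcaveOn ℝ {x : ℝ | a < x} (fun x => (u x).toReal) := by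
  have hconv : Convex ℝ {x : ℝ | a < x} :=
    (ordConnected_Ioi.preimage_mono EReal.coe_strictMono.monotone).convex
  refine ⟨hconv, fun x hx y hy s t hs ht hst => ?_⟩
  obtain rfl : t = 1 - s := by linarith
  have h := EReal.toReal_le_toReal (hu_conc x y s hx hy hs (by linarith))
    (EReal.coe_ne_bot _) (hu_ne_top _)
  rw [EReal.toReal_coe] at h
  simpa only [smul_eq_mul] using h

lemma le_add_mul_of_hasDerivWithinAt_Iio (ha : a < 0) (hu_ne_top : ∀ x : ℝ, u x ≠ ⊤)
    (hu_bot : ∀ x : ℝ, (x : EReal) < a → u x = ⊥)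
    (hu_fin : ∀ x : ℝ, a < (x : EReal) → u x ≠ ⊥) (hu_mono : Monotone u)
    (hu_conc : ∀ x y t : ℝ, a < (x : EReal) → a < (y : EReal) → 0 ≤ t → t ≤ 1 →
      ((t * (u x).toReal + (1 - t) * (u y).toReal : ℝ) : EReal) ≤ u (t * x + (1 - t) * y))
    {β : ℝ} (hβ : HasDerivWithinAt (fun x : ℝ => (u x).toReal) β (Iio 0) 0) (x : ℝ) :
    u x ≤ u 0 + ((x * β : ℝ) : EReal) := by
  set D := {x : ℝ | a < x}
  have h0 := zero_mem_interior_setOf_lt_coe ha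
  have hcoe : ∀ z ∈ D, u z = (((u z).toReal : ℝ) : EReal) := fun z hz =>
    (EReal.coe_toReal (hu_ne_top z) (hu_fin z hz)).symm
  have hline : ∀ z ∈ D, u z ≤ (((u 0).toReal + z * β : ℝ) : EReal) := fun z hz => by
    have := (concaveOn_toReal hu_ne_top hu_conc).le_add_mul_sub_of_hasDerivWithinAt_Iio
      h0 hβ hz
    rw [hcoe z hz]
    exact EReal.coe_le_coe_iff.2 (by linarith)
  rw [hcoe 0 (interior_subset h0), ← EReal.coe_add]
  rcases lt_trichotomy (x : EReal) a with hxa | rfl | hax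
  · simp [hu_bot x hxa]
  · -- pass to the limit `z → x⁺` in `u x ≤ u z ≤ u 0 + z β`
    have hx0 : x < 0 := by exact_mod_cast ha
    have hcont : Continuous fun z : ℝ => (((u 0).toReal + z * β : ℝ) : EReal) :=
      continuous_coe_real_ereal.comp (by fun_prop)
    refine ge_of_tendsto (hcont.tendsto x |>.mono_left (nhdsWithin_le_nhds (s := Ioi x))) ?_
    filter_upwards [Ioo_mem_nhdsGT hx0] with z hz
    exact (hu_mono hz.1.le).trans (hline z (EReal.coe_lt_coe_iff.2 hz.1))
  · exact hline x hax

end Utility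

section Conjugates

variable {u : ℝ → EReal} {β : ℝ}

lemma utilityConjugate_eq_of_le_add_mul (hline : ∀ x, u x ≤ u 0 + ((x * β : ℝ) : EReal)) :
    utilityConjugate u β = u 0 := by
  refine le_antisymm (iSup_le fun x => ?_) ?_
  · rw [EReal.sub_le_iff_le_add (.inl (EReal.coe_ne_bot _)) (.inl (EReal.coe_ne_top _))]
    exact hline x
  · exact le_iSup_of_le 0 (by simp)

variable {r : ℝ}

lemma youngConjugate_eq_iSup_toENNReal (hu_mono : Monotone u) (hr : u 0 = r) (y : ℝ) :
    youngConjugate u y = ⨆ x : ℝ, (u (-|x|) + ((x * y : ℝ) : EReal) - r).toENNReal := by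
  refine iSup_congr fun x => ?_
  rw [hr]
  exact EReal.ofReal_sub_toENNReal_coe_sub (hr ▸ hu_mono (by simp)) _

lemma youngConjugate_eq_zero (hu_mono : Monotone u) (hr : u 0 = r)
    (hline : ∀ x, u x ≤ u 0 + ((x * β : ℝ) : EReal)) {y : ℝ} (hy : |y| ≤ β) :
    youngConjugate u y = 0 := by
  rw [youngConjugate_eq_iSup_toENNReal hu_mono hr, ENNReal.iSup_eq_zero]
  intro x
  have hxy : x * y ≤ |x| * β := (le_abs_self _).trans
    (by rw [abs_mul]; exact mul_le_mul_of_nonneg_left hy (abs_nonneg x))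
  have h := hline (-|x|)
  rw [hr, ← EReal.coe_add] at h
  refine EReal.toENNReal_of_nonpos ?_
  generalize u (-|x|) = v at h ⊢
  induction v with
  | bot => simp
  | top => exact absurd h (not_le.2 (EReal.coe_lt_top _))
  | coe w =>
    norm_cast at h ⊢
    linarith

lemma coe_youngConjugate (hu_mono : Monotone u) (hr : u 0 = r)
    (hline : ∀ x, u x ≤ u 0 + ((x * β : ℝ) : EReal)) {y : ℝ} (hy : β ≤ |y|) :
    (youngConjugate u y : EReal) = utilityConjugate u |y| - u 0 := by
  rw [youngConjugate_eq_iSup_toENNReal hu_mono hr, hr]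
  set g : ℝ → EReal := fun x => u (-|x|) + ((x * y : ℝ) : EReal) - r
  have hconj_nonneg : 0 ≤ utilityConjugate u |y| - r := by
    rw [EReal.sub_nonneg (.inr (EReal.coe_ne_top r)) (.inr (EReal.coe_ne_bot r)), ← hr]
    exact le_iSup_of_le 0 (by simp)
  suffices h : ⨆ x, (g x).toENNReal = (utilityConjugate u |y| - r).toENNReal by
    rw [h, EReal.coe_toENNReal hconj_nonneg]
  refine le_antisymm (iSup_le fun x => EReal.toENNReal_le_toENNReal ?_) ?_
  · refine EReal.sub_le_sub ?_ le_rfl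
    calc u (-|x|) + ((x * y : ℝ) : EReal) ≤ u (-|x|) - ((-|x| * |y| : ℝ) : EReal) := by
          rw [sub_eq_add_neg, ← EReal.coe_neg, neg_mul, neg_neg, ← abs_mul]
          gcongr
          exact le_abs_self _
      _ ≤ utilityConjugate u |y| := le_iSup (fun x : ℝ => u x - ((x * |y| : ℝ) : EReal)) (-|x|)
  rw [← EReal.toENNReal_coe (x := ⨆ x, (g x).toENNReal)]
  refine EReal.toENNReal_le_toENNReal ?_
  rw [EReal.sub_le_iff_le_add (.inl (EReal.coe_ne_bot r)) (.inl (EReal.coe_ne_top r))]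
  refine iSup_le fun t => ?_
  rcases le_or_gt t 0 with ht | ht
  · obtain ⟨x, hxt, hxy⟩ : ∃ x : ℝ, -|x| = t ∧ x * y = -t * |y| := by
      rcases le_or_gt 0 y with hy0 | hy0
      · exact ⟨-t, by simp [abs_of_nonpos ht], by rw [abs_of_nonneg hy0]⟩
      · exact ⟨t, by simp [abs_of_nonpos ht], by rw [abs_of_neg hy0]; ring⟩
    calc u t - ((t * |y| : ℝ) : EReal) = g x + r := by
          rw [EReal.sub_add_cancel, hxt, hxy, sub_eq_add_neg, ← EReal.coe_neg, neg_mul]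
      _ ≤ (g x).toENNReal + r := by
          gcongr
          rw [EReal.coe_toENNReal_eq_max]
          exact le_max_right _ _
      _ ≤ _ := by
          gcongr
          exact EReal.coe_ennreal_le_coe_ennreal_iff.2 (le_iSup (fun x => (g x).toENNReal) x)
  · calc u t - ((t * |y| : ℝ) : EReal) ≤ r := by
          rw [EReal.sub_le_iff_le_add (.inl (EReal.coe_ne_bot _)) (.inl (EReal.coe_ne_top _)),
            ← EReal.coe_add]
          refine (hline t).trans ?_
          rw [hr, ← EReal.coe_add, EReal.coe_le_coe_iff]
          gcongr
      _ ≤ _ := le_add_of_nonneg_left (EReal.coe_ennreal_nonneg _)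

end Conjugates

theorem statement3_general
    (a : EReal) (ha : a < 0)
    (u : ℝ → EReal)
    (hu_ne_top : ∀ x : ℝ, u x ≠ ⊤)
    (hu_bot : ∀ x : ℝ, (x : EReal) < a → u x = ⊥)
    (hu_fin : ∀ x : ℝ, a < (x : EReal) → u x ≠ ⊥)
    (hu_mono : Monotone u)
    (hu_conc : ∀ x y t : ℝ, a < (x : EReal) → a < (y : EReal) → 0 ≤ t → t ≤ 1 →
      ((t * (u x).toReal + (1 - t) * (u y).toReal : ℝ) : EReal) ≤ u (t * x + (1 - t) * y))
    -- the convex conjugate `Φ(y) = sup_x (u(x) - x·y)` of the utility `u`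
    (Phi : ℝ → EReal)
    (hPhi : ∀ y : ℝ, Phi y = ⨆ x : ℝ, (u x - ((x * y : ℝ) : EReal)))
    -- the Young function `û(x) = -u(-|x|) + u(0)`
    (uhat : ℝ → ℝ≥0∞)
    (huhat : ∀ x : ℝ, uhat x = (u 0 - u (-|x|)).toENN)
    -- its convex conjugate `Φ̂(y) = sup_x (x·y - û(x))`
    (Phat : ℝ → ℝ≥0∞)
    (hPhat : ∀ y : ℝ, Phat y = ⨆ x : ℝ, (ENNReal.ofReal (x * y) - uhat x)) :
    -- the left derivative of `u` at `0` exists …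
    (∃ β : ℝ, HasDerivWithinAt (fun x : ℝ => (u x).toReal) β (Iio 0) 0) ∧
    -- … it is nonnegative, and the asserted identities hold
    ∀ β : ℝ, HasDerivWithinAt (fun x : ℝ => (u x).toReal) β (Iio 0) 0 →
      0 ≤ β ∧
      Phi β = u 0 ∧
      (∀ y : ℝ, |y| ≤ β → Phat y = 0) ∧
      (∀ y : ℝ, β < |y| → (Phat y : EReal) = Phi |y| - Phi β) := by
  obtain rfl : Phi = utilityConjugate u := funext hPhi
  obtain rfl : Phat = youngConjugate u :=
    funext fun y => by simp only [hPhat, huhat, EReal.toENN_eq_toENNReal, youngConjugate]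
  obtain ⟨r, hr⟩ : ∃ r : ℝ, u 0 = r := ⟨_, (EReal.coe_toReal (hu_ne_top 0) (hu_fin 0 ha)).symm⟩
  refine ⟨⟨_, ((concaveOn_toReal hu_ne_top hu_conc).differentiableWithinAt_Iio_of_mem_interior
    (zero_mem_interior_setOf_lt_coe ha)).hasDerivWithinAt⟩, fun β hβ => ?_⟩
  have hline := le_add_mul_of_hasDerivWithinAt_Iio ha hu_ne_top hu_bot hu_fin hu_mono hu_conc hβ
  have hβ_nonneg : 0 ≤ β := by
    have h := (hu_mono zero_le_one).trans (hline 1)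
    rw [hr, ← EReal.coe_add, EReal.coe_le_coe_iff] at h
    linarith
  have hconj_β := utilityConjugate_eq_of_le_add_mul hline
  refine ⟨hβ_nonneg, hconj_β, fun y hy => youngConjugate_eq_zero hu_mono hr hline hy,
    fun y hy => ?_⟩
  rw [coe_youngConjugate hu_mono hr hline hy.le, hconj_β]

/-- Let `β := D⁻u(0) ∈ [0, ∞)` be the left derivative of `u` at `0` (it
exists and is finite by concavity).  Then `Φ(β) = u(0)` and the convex conjugate `Φ̂` of
`û` satisfies `Φ̂(y) = 0` for `|y| ≤ β` and `Φ̂(y) = Φ(|y|) - Φ(β)` for `|y| > β`. -/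
theorem statement3
    (a : EReal) (ha : a < 0)
    (u : ℝ → EReal)
    (hu_ne_top : ∀ x : ℝ, u x ≠ ⊤)
    (hu_bot : ∀ x : ℝ, (x : EReal) < a → u x = ⊥)
    (hu_fin : ∀ x : ℝ, a < (x : EReal) → u x ≠ ⊥)
    (hu_mono : Monotone u)
    (hu_conc : ∀ x y t : ℝ, a < (x : EReal) → a < (y : EReal) → 0 ≤ t → t ≤ 1 →
      ((t * (u x).toReal + (1 - t) * (u y).toReal : ℝ) : EReal) ≤ u (t * x + (1 - t) * y))
    (hu_lim : Tendsto u atBot (𝓝 ⊥))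
    -- the convex conjugate `Φ(y) = sup_x (u(x) - x·y)` of the utility `u`
    (Phi : ℝ → EReal)
    (hPhi : ∀ y : ℝ, Phi y = ⨆ x : ℝ, (u x - ((x * y : ℝ) : EReal)))
    -- the Young function `û(x) = -u(-|x|) + u(0)`
    (uhat : ℝ → ℝ≥0∞)
    (huhat : ∀ x : ℝ, uhat x = (u 0 - u (-|x|)).toENN)
    -- its convex conjugate `Φ̂(y) = sup_x (x·y - û(x))`
    (Phat : ℝ → ℝ≥0∞)
    (hPhat : ∀ y : ℝ, Phat y = ⨆ x : ℝ, (ENNReal.ofReal (x * y) - uhat x)) :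
    -- the left derivative of `u` at `0` exists …
    (∃ β : ℝ, HasDerivWithinAt (fun x : ℝ => (u x).toReal) β (Iio 0) 0) ∧
    -- … it is nonnegative, and the asserted identities hold
    ∀ β : ℝ, HasDerivWithinAt (fun x : ℝ => (u x).toReal) β (Iio 0) 0 →
      0 ≤ β ∧
      Phi β = u 0 ∧
      (∀ y : ℝ, |y| ≤ β → Phat y = 0) ∧
      (∀ y : ℝ, β < |y| → (Phat y : EReal) = Phi |y| - Phi β) :=
  statement3_general a ha u hu_ne_top hu_bot hu_fin hu_mono hu_conc Phi hPhi uhat huhat Phat hPhat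
end
end

section
/- Let z : L^∞(P) → ℝ be a positive continuous linear functional (z(f) ≥ 0 whenever f ≥ 0 P-a.s.). The following are equivalent: (i) z is lattice-orthogonal to every order-continuous positive functional, i.e., for every g ∈ L¹(P) with g ≥ 0 and every f ∈ L^∞(P) with f ≥ 0, inf{ z(f - h) + E[g·h] : h ∈ L^∞(P), 0 ≤ h ≤ f } = 0; (ii) there exists a decreasing sequence of measurable sets (A_n) with P(⋂_n A_n) = 0 such that z(f·1_{A_n}) = z(f) for every f ∈ L^∞(P) and every n. -/
open MeasureTheory Filter Set Topology
open scoped ENNReal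

noncomputable section

/-!
(ii) ⇒ (i): replacing `f` by `h = f·1_{A_n}` leaves `z(f - h) = 0`, while
`E[g·f·1_{A_n}] → 0` because the `A_n` decrease to a null set.

(i) ⇒ (ii): applying (i) to `g = f = 1` gives `0 ≤ h_k ≤ 1` with `z(1 - h_k) + E[h_k]` as
small as we like. For `B_k = {h_k ≥ 1/2}`, Chebyshev bounds `P(B_k)` by `2 E[h_k]`, and
`1_{B_kᶜ} ≤ 2(1 - h_k)` bounds `z(1_{B_kᶜ})` by `2 z(1 - h_k)`. With summable errors, the sets
`A_n = ⋃_{k ≥ n} B_k` decrease to a null set by Borel–Cantelli, and `z(1_{A_nᶜ}) = 0`.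
Positivity then kills `z` on every bounded function supported in `A_nᶜ`, so
`z(f·1_{A_n}) = z(f)`.
-/

section

variable {Ω : Type*} [MeasurableSpace Ω]

structure IsPositiveLinearFunctional (P : Measure Ω) (z : (Ω → ℝ) → ℝ) : Prop where
  map_add : ∀ f g : Ω → ℝ, MemLp f ⊤ P → MemLp g ⊤ P → z (f + g) = z f + z g
  map_smul : ∀ (c : ℝ) (f : Ω → ℝ), MemLp f ⊤ P → z (c • f) = c * z f
  nonneg : ∀ f : Ω → ℝ, MemLp f ⊤ P → 0 ≤ᵐ[P] f → 0 ≤ z f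

/-- By the Riesz–Kantorovich formula, the infimum of this set is `(z ⊓ g)(f)`, where `g` acts
on `L^∞(P)` by integration. -/
def rieszKantorovichSet (P : Measure Ω) (z : (Ω → ℝ) → ℝ) (g f : Ω → ℝ) : Set ℝ :=
  {r | ∃ h : Ω → ℝ, MemLp h ⊤ P ∧ 0 ≤ᵐ[P] h ∧ h ≤ᵐ[P] f ∧
    r = z (f - h) + ∫ ω, g ω * h ω ∂P}

namespace IsPositiveLinearFunctional

variable {P : Measure Ω} {z : (Ω → ℝ) → ℝ}

theorem map_sub (hz : IsPositiveLinearFunctional P z) {f g : Ω → ℝ} (hf : MemLp f ⊤ P)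
    (hg : MemLp g ⊤ P) : z (f - g) = z f - z g := by
  rw [sub_eq_add_neg, ← neg_one_smul ℝ g, hz.map_add _ _ hf (hg.const_smul _),
    hz.map_smul _ _ hg]
  ring

theorem mono (hz : IsPositiveLinearFunctional P z) {f g : Ω → ℝ} (hf : MemLp f ⊤ P)
    (hg : MemLp g ⊤ P) (hfg : f ≤ᵐ[P] g) : z f ≤ z g := by
  have := hz.nonneg _ (hg.sub hf) (by filter_upwards [hfg] with ω h using sub_nonneg.mpr h)
  rwa [hz.map_sub hg hf, sub_nonneg] at this

theorem map_indicator_eq_zero (hz : IsPositiveLinearFunctional P z) {S : Set Ω}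
    (hS : MeasurableSet S) (hS0 : z (S.indicator 1) = 0) {f : Ω → ℝ} (hf : MemLp f ⊤ P) :
    z (S.indicator f) = 0 := by
  set M := lpNorm f ⊤ P
  have h1 : MemLp (S.indicator (1 : Ω → ℝ)) ⊤ P := (memLp_top_const 1).indicator hS
  have hbound : ∀ᵐ ω ∂P, |S.indicator f ω| ≤ (M • S.indicator 1) ω := by
    filter_upwards [ae_le_lpNorm_exponent_top hf] with ω hω
    by_cases hω' : ω ∈ S
    · simpa [hω', M] using hω
    · simp [hω']
  have hupper := hz.mono (hf.indicator hS) (h1.const_smul M)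
    (by filter_upwards [hbound] with ω hω using (abs_le.mp hω).2)
  have hlower := hz.mono (h1.const_smul (-M)) (hf.indicator hS)
    (by filter_upwards [hbound] with ω hω using by simpa using (abs_le.mp hω).1)
  rw [hz.map_smul _ _ h1, hS0, mul_zero] at hupper hlower
  exact le_antisymm hupper hlower

theorem map_indicator_eq_self (hz : IsPositiveLinearFunctional P z) {S : Set Ω}
    (hS : MeasurableSet S) (hS0 : z (Sᶜ.indicator 1) = 0) {f : Ω → ℝ} (hf : MemLp f ⊤ P) :
    z (S.indicator f) = z f := by
  conv_rhs => rw [← indicator_self_add_compl S f]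
  rw [hz.map_add _ _ (hf.indicator hS) (hf.indicator hS.compl),
    hz.map_indicator_eq_zero hS.compl hS0 hf, add_zero]

/-- The set is `B = {h ≥ 1/2}` (up to a null set): Chebyshev bounds `P B`, and
`1_{Bᶜ} ≤ 2 (1 - h)`. -/
theorem exists_measurableSet_le_two_mul (hz : IsPositiveLinearFunctional P z)
    [IsFiniteMeasure P] {h : Ω → ℝ} (hh : MemLp h ⊤ P) (h0 : 0 ≤ᵐ[P] h)
    (h1 : h ≤ᵐ[P] 1) :
    ∃ B : Set Ω, MeasurableSet B ∧ P B ≤ ENNReal.ofReal (2 * ∫ ω, h ω ∂P) ∧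
      z (Bᶜ.indicator 1) ≤ 2 * z (1 - h) := by
  obtain ⟨h', hh'_meas, hh'⟩ := hh.1
  have hB : MeasurableSet {ω | 2⁻¹ ≤ h' ω} :=
    measurableSet_le measurable_const hh'_meas.measurable
  refine ⟨_, hB, ?_, ?_⟩
  · have hmarkov := mul_meas_ge_le_integral_of_nonneg (h0.trans_eq hh')
      ((hh.integrable le_top).congr hh') 2⁻¹
    rw [← integral_congr_ae hh'] at hmarkov
    rw [← ofReal_measureReal]
    exact ENNReal.ofReal_le_ofReal (by linarith)
  · have h1h : MemLp (1 - h) ⊤ P := (memLp_top_const 1).sub hh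
    refine (hz.mono ((memLp_top_const 1).indicator hB.compl) (h1h.const_smul 2) ?_).trans_eq
      (hz.map_smul _ _ h1h)
    filter_upwards [hh', h0, h1] with ω hω hω0 hω1
    simp only [Pi.zero_apply, Pi.one_apply] at hω0 hω1
    simp only [indicator_apply, mem_compl_iff, mem_ofPred_eq, Pi.one_apply, Pi.smul_apply,
      Pi.sub_apply, smul_eq_mul]
    split_ifs <;> linarith

theorem exists_measurableSet_le_of_isGLB (hz : IsPositiveLinearFunctional P z)
    [IsFiniteMeasure P] (hglb : IsGLB (rieszKantorovichSet P z 1 1) 0) {ε : ℝ}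
    (hε : 0 < ε) :
    ∃ B : Set Ω, MeasurableSet B ∧ P B ≤ ENNReal.ofReal ε ∧
      z (Bᶜ.indicator 1) ≤ ε := by
  obtain ⟨_, ⟨h, hh, h0, h1, rfl⟩, -, hlt⟩ := hglb.exists_between (half_pos hε)
  simp only [Pi.one_apply, one_mul] at hlt
  have hz_nonneg : 0 ≤ z (1 - h) := hz.nonneg _ ((memLp_top_const 1).sub hh)
    (by filter_upwards [h1] with ω hω using sub_nonneg.mpr hω)
  have hint_nonneg : 0 ≤ ∫ ω, h ω ∂P := integral_nonneg_of_ae h0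
  obtain ⟨B, hB, hPB, hzB⟩ := hz.exists_measurableSet_le_two_mul hh h0 h1
  exact ⟨B, hB, hPB.trans (ENNReal.ofReal_le_ofReal (by linarith)), by linarith⟩

theorem exists_antitone_of_tsum_ne_top (hz : IsPositiveLinearFunctional P z)
    {B : ℕ → Set Ω} (hB : ∀ k, MeasurableSet (B k)) (hPB : ∑' k, P (B k) ≠ ∞)
    (hzB : Tendsto (fun k ↦ z ((B k)ᶜ.indicator 1)) atTop (𝓝 0)) :
    ∃ A : ℕ → Set Ω, (∀ n, MeasurableSet (A n)) ∧ (∀ n, A (n + 1) ⊆ A n) ∧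
      P (⋂ n, A n) = 0 ∧
      ∀ f : Ω → ℝ, MemLp f ⊤ P → ∀ n, z ((A n).indicator f) = z f := by
  have hA : ∀ n, MeasurableSet (⋃ k ≥ n, B k) := fun n ↦
    .biUnion (to_countable _) fun k _ ↦ hB k
  refine ⟨fun n ↦ ⋃ k ≥ n, B k, hA,
    fun n ↦ biUnion_subset_biUnion_left fun k hk ↦ (Nat.le_succ n).trans hk, ?_, ?_⟩
  · simpa [limsup_eq_iInf_iSup_of_nat] using measure_limsup_atTop_eq_zero hPB
  · intro f hf n
    have h1 : MemLp ((⋃ k ≥ n, B k)ᶜ.indicator (1 : Ω → ℝ)) ⊤ P :=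
      (memLp_top_const 1).indicator (hA n).compl
    refine hz.map_indicator_eq_self (hA n) (le_antisymm ?_ ?_) hf
    · refine ge_of_tendsto hzB (eventually_atTop.mpr ⟨n, fun k hk ↦ hz.mono h1
        ((memLp_top_const 1).indicator (hB k).compl) (ae_of_all _ ?_)⟩)
      exact indicator_le_indicator_of_subset
        (compl_subset_compl.mpr (subset_biUnion_of_mem hk)) fun _ ↦ zero_le_one
    · exact hz.nonneg _ h1 (ae_of_all _ (indicator_nonneg fun _ _ ↦ zero_le_one))

theorem exists_antitone_of_isGLB (hz : IsPositiveLinearFunctional P z) [IsFiniteMeasure P]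
    (hglb : IsGLB (rieszKantorovichSet P z 1 1) 0) :
    ∃ A : ℕ → Set Ω, (∀ n, MeasurableSet (A n)) ∧ (∀ n, A (n + 1) ⊆ A n) ∧
      P (⋂ n, A n) = 0 ∧
      ∀ f : Ω → ℝ, MemLp f ⊤ P → ∀ n, z ((A n).indicator f) = z f := by
  choose B hB hPB hzB using fun k : ℕ ↦
    hz.exists_measurableSet_le_of_isGLB hglb (pow_pos one_half_pos k)
  have hsum : ∑' k, P (B k) ≤ ENNReal.ofReal (∑' k : ℕ, (1 / 2 : ℝ) ^ k) :=
    calc ∑' k, P (B k) ≤ ∑' k, ENNReal.ofReal ((1 / 2) ^ k) := ENNReal.tsum_le_tsum hPB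
      _ = ENNReal.ofReal (∑' k : ℕ, (1 / 2 : ℝ) ^ k) :=
        (ENNReal.ofReal_tsum_of_nonneg (fun k ↦ by positivity) summable_geometric_two).symm
  refine hz.exists_antitone_of_tsum_ne_top hB
    (ne_top_of_le_ne_top ENNReal.ofReal_ne_top hsum) ?_
  exact squeeze_zero (fun k ↦ hz.nonneg _ ((memLp_top_const 1).indicator (hB k).compl)
    (ae_of_all _ (indicator_nonneg fun _ _ ↦ zero_le_one))) hzB
    (tendsto_pow_atTop_nhds_zero_of_lt_one (by norm_num) (by norm_num))

theorem zero_mem_lowerBounds_rieszKantorovichSet (hz : IsPositiveLinearFunctional P z)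
    {g f : Ω → ℝ} (hg0 : 0 ≤ᵐ[P] g) (hf : MemLp f ⊤ P) :
    0 ∈ lowerBounds (rieszKantorovichSet P z g f) := by
  rintro _ ⟨h, hh, h0, hhf, rfl⟩
  have hz_nonneg : 0 ≤ z (f - h) :=
    hz.nonneg _ (hf.sub hh) (by filter_upwards [hhf] with ω hω using sub_nonneg.mpr hω)
  have hint_nonneg : 0 ≤ ∫ ω, g ω * h ω ∂P :=
    integral_nonneg_of_ae (by filter_upwards [hg0, h0] with ω hg hh using mul_nonneg hg hh)
  exact add_nonneg hz_nonneg hint_nonneg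

theorem isGLB_rieszKantorovichSet (hz : IsPositiveLinearFunctional P z)
    {A : ℕ → Set Ω} (hA : ∀ n, MeasurableSet (A n)) (hA_anti : Antitone A)
    (hA_null : P (⋂ n, A n) = 0)
    (hzA : ∀ f : Ω → ℝ, MemLp f ⊤ P → ∀ n, z ((A n).indicator f) = z f)
    {g f : Ω → ℝ} (hg : Integrable g P) (hg0 : 0 ≤ᵐ[P] g) (hf : MemLp f ⊤ P)
    (hf0 : 0 ≤ᵐ[P] f) :
    IsGLB (rieszKantorovichSet P z g f) 0 := by
  refine isGLB_of_mem_closure (hz.zero_mem_lowerBounds_rieszKantorovichSet hg0 hf)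
    (mem_closure_of_tendsto (b := atTop) (f := fun n ↦ ∫ ω in A n, g ω * f ω ∂P) ?_
      (.of_forall fun n ↦ ?_))
  · have hgf : Integrable (fun ω ↦ g ω * f ω) P := hg.mul_of_top_left hf
    simpa [setIntegral_measure_zero _ hA_null] using
      tendsto_setIntegral_of_antitone hA hA_anti ⟨0, hgf.integrableOn⟩
  · refine ⟨(A n).indicator f, hf.indicator (hA n), ?_, ?_, ?_⟩
    · filter_upwards [hf0] with ω hω using indicator_nonneg (fun _ _ ↦ hω) ω
    · filter_upwards [hf0] with ω hω using indicator_le_self' (fun _ _ ↦ hω) ω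
    · rw [hz.map_sub hf (hf.indicator (hA n)), hzA f hf n, sub_self, zero_add,
        ← integral_indicator (hA n)]
      simp_rw [indicator_mul_right]

end IsPositiveLinearFunctional

end

theorem statement5_general
    {Ω : Type*} [MeasurableSpace Ω] (P : Measure Ω) [IsProbabilityMeasure P]
    (z : (Ω → ℝ) → ℝ)
    -- `z` is linear on `L^∞(P)`
    (hz_add : ∀ f g : Ω → ℝ, MemLp f ⊤ P → MemLp g ⊤ P → z (f + g) = z f + z g)
    (hz_smul : ∀ (c : ℝ) (f : Ω → ℝ), MemLp f ⊤ P → z (c • f) = c * z f)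
    -- `z` is positive
    (hz_pos : ∀ f : Ω → ℝ, MemLp f ⊤ P → 0 ≤ᵐ[P] f → 0 ≤ z f) :
    ((∀ g : Ω → ℝ, Integrable g P → 0 ≤ᵐ[P] g →
        ∀ f : Ω → ℝ, MemLp f ⊤ P → 0 ≤ᵐ[P] f →
          IsGLB {r : ℝ | ∃ h : Ω → ℝ, MemLp h ⊤ P ∧ 0 ≤ᵐ[P] h ∧ h ≤ᵐ[P] f ∧
              r = z (f - h) + ∫ ω, g ω * h ω ∂P} 0)
      ↔
     (∃ A : ℕ → Set Ω, (∀ n, MeasurableSet (A n)) ∧ (∀ n, A (n + 1) ⊆ A n) ∧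
        P (⋂ n, A n) = 0 ∧
        ∀ f : Ω → ℝ, MemLp f ⊤ P → ∀ n, z ((A n).indicator f) = z f)) := by
  have hz : IsPositiveLinearFunctional P z := ⟨hz_add, hz_smul, hz_pos⟩
  have h1_nonneg : (0 : Ω → ℝ) ≤ᵐ[P] 1 := ae_of_all _ fun _ ↦ zero_le_one
  constructor
  · intro horth
    exact hz.exists_antitone_of_isGLB
      (horth 1 (integrable_const 1) h1_nonneg 1 (memLp_top_const 1) h1_nonneg)
  · rintro ⟨A, hA, hA_succ, hA_null, hzA⟩ g hg hg0 f hf hf0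
    exact hz.isGLB_rieszKantorovichSet hA (antitone_nat_of_succ_le hA_succ) hA_null hzA
      hg hg0 hf hf0

/-- Lemma 10, case `a` finite.  Let `z` be a positive continuous linear
functional on `L^∞(P)`.  The following are equivalent:
(i) `z` is lattice-orthogonal to every order-continuous positive functional: for every
    `0 ≤ g ∈ L¹(P)` and every `0 ≤ f ∈ L^∞(P)`,
    `inf{ z(f - h) + E[g·h] : h ∈ L^∞, 0 ≤ h ≤ f } = 0`;
(ii) there is a decreasing sequence of measurable sets `(A_n)` with `P(⋂ A_n) = 0` such that
    `z(f·1_{A_n}) = z(f)` for every `f ∈ L^∞(P)` and every `n`. -/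
theorem statement5
    {Ω : Type*} [MeasurableSpace Ω] (P : Measure Ω) [IsProbabilityMeasure P]
    (z : (Ω → ℝ) → ℝ)
    -- `z` is well defined on `P`-equivalence classes
    (hz_ae : ∀ f g : Ω → ℝ, f =ᵐ[P] g → z f = z g)
    -- `z` is linear on `L^∞(P)`
    (hz_add : ∀ f g : Ω → ℝ, MemLp f ⊤ P → MemLp g ⊤ P → z (f + g) = z f + z g)
    (hz_smul : ∀ (c : ℝ) (f : Ω → ℝ), MemLp f ⊤ P → z (c • f) = c * z f)
    -- `z` is positive
    (hz_pos : ∀ f : Ω → ℝ, MemLp f ⊤ P → 0 ≤ᵐ[P] f → 0 ≤ z f)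
    -- `z` is continuous for the essential-supremum norm
    (hz_cont : ∃ C : ℝ, ∀ f : Ω → ℝ, MemLp f ⊤ P → |z f| ≤ C * (eLpNorm f ⊤ P).toReal) :
    ((∀ g : Ω → ℝ, Integrable g P → 0 ≤ᵐ[P] g →
        ∀ f : Ω → ℝ, MemLp f ⊤ P → 0 ≤ᵐ[P] f →
          IsGLB {r : ℝ | ∃ h : Ω → ℝ, MemLp h ⊤ P ∧ 0 ≤ᵐ[P] h ∧ h ≤ᵐ[P] f ∧
              r = z (f - h) + ∫ ω, g ω * h ω ∂P} 0)
      ↔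
     (∃ A : ℕ → Set Ω, (∀ n, MeasurableSet (A n)) ∧ (∀ n, A (n + 1) ⊆ A n) ∧
        P (⋂ n, A n) = 0 ∧
        ∀ f : Ω → ℝ, MemLp f ⊤ P → ∀ n, z ((A n).indicator f) = z f)) :=
  statement5_general P z hz_add hz_smul hz_pos

end
end

section
/- Assume (A1) and (A2). Let η ∈ L⁰(P) with η ≥ 0, E[Φ(η)] < ∞ and 0 < E[η] ≤ 1, and let c ∈ ℝ with c > a·E[η] (no restriction when a = -∞). Then the function λ ↦ λc + E[Φ(λη)] attains its minimum over (0, ∞) at a unique point λ(c; η) > 0, and λ(c; η) is the unique positive solution λ of the first-order condition c + E[η·Φ'(λη)] = 0 (with the convention 0·Φ'(0) := 0 on {η = 0}). -/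
/-!
For `y > 0` the supremum defining `Φ(y)` is attained at the unique `x > a` with `u'(x) = y`, and
the envelope theorem gives `Φ'(y) = -x`. Hence `Φ'` is strictly increasing on `(0, ∞)`, tends to
`-∞` at `0` and to `-a` at `∞`. By convexity of `Φ`, differentiation under the integral is
dominated, so `F(λ) = λc + E[Φ(λη)]` has derivative `F'(λ) = c + E[η Φ'(λη)]`, which is strictly
increasing because `η` is not a.s. zero. Monotone convergence shows `F' < 0` near `0` and, since
`c > a E[η]`, `F' > 0` for large `λ`. By Darboux `F'` vanishes somewhere; that point is the unique
root of `F'` and the unique strict minimiser of `F`.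
-/

open MeasureTheory Filter Set Topology
open scoped ENNReal

noncomputable section

/-- Extended-real-valued expectation: the lower integral of the positive part minus the lower
integral of the negative part. -/
def ewp {Ω : Type*} [MeasurableSpace Ω] (P : Measure Ω) (H : Ω → EReal) : EReal :=
  ((∫⁻ ω, (H ω).toENN ∂P : ℝ≥0∞) : EReal) - ((∫⁻ ω, (-(H ω)).toENN ∂P : ℝ≥0∞) : EReal)

theorem EReal.enorm_toReal_le_toENN_add {m : ℝ} {x : EReal} (hm : (m : EReal) ≤ x) :
    ‖x.toReal‖ₑ ≤ x.toENN + ENNReal.ofReal (2 * |m|) := by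
  induction x using EReal.rec with
  | bot => exact absurd hm (by simp)
  | top => simp [EReal.toENN]
  | coe r =>
    have hmr : m ≤ r := EReal.coe_le_coe_iff.1 hm
    rw [EReal.toReal_coe, Real.enorm_eq_ofReal_abs]
    calc ENNReal.ofReal |r| ≤ ENNReal.ofReal (r + 2 * |m|) :=
          ENNReal.ofReal_le_ofReal (by cases abs_cases r <;> cases abs_cases m <;> linarith)
      _ ≤ _ := ENNReal.ofReal_add_le

theorem EReal.exists_gt_coe_mul_lt {a : EReal} {e c : ℝ} (he : 0 < e) (h : a * e < c) :
    ∃ b : ℝ, a < b ∧ b * e < c := by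
  have hdiv (x : EReal) :=
    EReal.lt_div_iff (a := x) (c := c) (EReal.coe_pos.2 he) (EReal.coe_ne_top e)
  obtain ⟨b, hab, hb⟩ := EReal.lt_iff_exists_real_btwn.1 ((hdiv a).2 h)
  exact ⟨b, hab, by exact_mod_cast (hdiv b).1 hb⟩

theorem ite_zero_else_mul (e d : ℝ) : (if e = 0 then 0 else e * d) = e * d := by
  split_ifs with h <;> simp [h]

theorem MonotoneOn.add_mul_sub_le_of_hasDerivAt {D : Set ℝ} (hD : Convex ℝ D) (hDo : IsOpen D)
    {f f' : ℝ → ℝ} (hf : ∀ x ∈ D, HasDerivAt f (f' x) x) (hf' : MonotoneOn f' D)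
    {x y : ℝ} (hx : x ∈ D) (hy : y ∈ D) : f x + f' x * (y - x) ≤ f y := by
  have hconv : ConvexOn ℝ D f := by
    refine MonotoneOn.convexOn_of_deriv hD (fun z hz => (hf z hz).continuousAt.continuousWithinAt)
      ?_ ?_ <;> rw [hDo.interior_eq]
    · exact fun z hz => (hf z hz).differentiableAt.differentiableWithinAt
    · exact hf'.congr fun z hz => (hf z hz).deriv.symm
  rcases lt_trichotomy x y with hxy | rfl | hxy
  · have := hconv.le_slope_of_hasDerivAt hx hy hxy (hf x hx)
    rw [slope_def_field, le_div_iff₀ (sub_pos.2 hxy)] at this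
    linarith
  · simp
  · have := hconv.slope_le_of_hasDerivAt hy hx hxy (hf x hx)
    rw [slope_def_field, div_le_iff₀ (sub_pos.2 hxy)] at this
    linarith

theorem measurable_comp_of_continuousOn_Ioi {Ω β : Type*} [MeasurableSpace Ω] [TopologicalSpace β]
    [MeasurableSpace β] [BorelSpace β] {f : ℝ → β} (hf : ContinuousOn f (Ioi 0))
    {g : Ω → ℝ} (hg : Measurable g) (hg0 : ∀ ω, 0 ≤ g ω) : Measurable fun ω => f (g ω) := by
  have hpw : Measurable ((Ioi 0).piecewise f fun _ => f 0) :=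
    hf.measurable_piecewise continuousOn_const measurableSet_Ioi
  convert hpw.comp hg using 1
  funext ω
  rcases (hg0 ω).lt_or_eq with h | h
  · simp [piecewise, h]
  · simp [piecewise, ← h]

section ExtendedExpectation

variable {Ω : Type*} [MeasurableSpace Ω] {P : Measure Ω} [IsFiniteMeasure P] {H : Ω → EReal}
  {m : ℝ}

theorem integrable_toReal_of_lintegral_toENN_lt_top (hH : Measurable H)
    (hm : ∀ ω, (m : EReal) ≤ H ω) (hfin : ∫⁻ ω, (H ω).toENN ∂P < ⊤) :
    Integrable (fun ω => (H ω).toReal) P := by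
  refine ⟨(measurable_ereal_toReal.comp hH).aestronglyMeasurable, ?_⟩
  calc ∫⁻ ω, ‖(H ω).toReal‖ₑ ∂P
      ≤ ∫⁻ ω, ((H ω).toENN + ENNReal.ofReal (2 * |m|)) ∂P :=
        lintegral_mono fun ω => EReal.enorm_toReal_le_toENN_add (hm ω)
    _ = ∫⁻ ω, (H ω).toENN ∂P + ENNReal.ofReal (2 * |m|) * P univ := by
        rw [lintegral_add_right _ measurable_const, lintegral_const]
    _ < ⊤ := ENNReal.add_lt_top.2 ⟨hfin, ENNReal.mul_lt_top ENNReal.ofReal_lt_top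
        (measure_lt_top P univ)⟩

theorem ewp_eq_integral_toReal (hH : Measurable H) (hm : ∀ ω, (m : EReal) ≤ H ω)
    (hfin : ∫⁻ ω, (H ω).toENN ∂P < ⊤) :
    ewp P H = ((∫ ω, (H ω).toReal ∂P : ℝ) : EReal) := by
  have hint := integrable_toReal_of_lintegral_toENN_lt_top hH hm hfin
  have hne_bot : ∀ ω, H ω ≠ ⊥ := fun ω => ne_bot_of_le_ne_bot (EReal.coe_ne_bot m) (hm ω)
  have hne_top : ∀ᵐ ω ∂P, H ω ≠ ⊤ := (ae_lt_top hH.ereal_toENNReal hfin.ne).mono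
    fun ω hω => EReal.toENNReal_ne_top_iff.1 hω.ne
  have hpos : ∫⁻ ω, (H ω).toENN ∂P = ∫⁻ ω, ENNReal.ofReal (H ω).toReal ∂P :=
    lintegral_congr_ae (hne_top.mono fun ω hω => EReal.toENNReal_of_ne_top hω)
  have hneg : ∫⁻ ω, (-H ω).toENN ∂P = ∫⁻ ω, ENNReal.ofReal (-(H ω).toReal) ∂P :=
    lintegral_congr fun ω => by
      rw [← EReal.toReal_neg_eq]
      exact EReal.toENNReal_of_ne_top (EReal.neg_eq_top_iff.not.2 (hne_bot ω))
  have hneg_fin : ∫⁻ ω, ENNReal.ofReal (-(H ω).toReal) ∂P ≠ ⊤ := hint.neg.lintegral_lt_top.ne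
  rw [ewp, hpos, hneg, integral_eq_lintegral_pos_part_sub_lintegral_neg_part hint, EReal.coe_sub,
    EReal.coe_ennreal_toReal hint.lintegral_lt_top.ne, EReal.coe_ennreal_toReal hneg_fin]

end ExtendedExpectation

section Minimization

variable {Ω : Type*} [MeasurableSpace Ω] {P : Measure Ω}

theorem exists_lt_integral_of_monotone {f : ℕ → Ω → ℝ} {g : Ω → ℝ}
    (hf : ∀ n, Integrable (f n) P) (hg : Integrable g P) (hmono : ∀ ω, Monotone fun n => f n ω)
    (hle : ∀ ω, ∀ᶠ n in atTop, g ω ≤ f n ω) {C : ℝ} (hC : C < ∫ ω, g ω ∂P) :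
    ∃ n, C < ∫ ω, f n ω ∂P := by
  have hlim : Tendsto (fun n => ∫ ω, min (f n ω) (g ω) ∂P) atTop (𝓝 (∫ ω, g ω ∂P)) :=
    integral_tendsto_of_tendsto_of_monotone (fun n => (hf n).inf hg) hg
      (ae_of_all _ fun ω n k hnk => min_le_min_right _ (hmono ω hnk))
      (ae_of_all _ fun ω => tendsto_const_nhds.congr' <|
        (hle ω).mono fun n h => (min_eq_right h).symm)
  obtain ⟨n, hn⟩ := (hlim.eventually (eventually_gt_nhds hC)).exists
  exact ⟨n, hn.trans_le (integral_mono ((hf n).inf hg) (hf n) fun ω => min_le_left _ _)⟩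

variable {φ φ' : ℝ → ℝ} {η : Ω → ℝ} {s t e : ℝ}

theorem hasDerivAt_comp_mul (hφ' : ∀ y, 0 < y → HasDerivAt φ (φ' y) y) (ht : 0 < t)
    (he : 0 ≤ e) : HasDerivAt (fun s => φ (s * e)) (e * φ' (t * e)) t := by
  rcases he.eq_or_lt with rfl | he
  · simpa using hasDerivAt_const t (φ 0)
  · exact ((hφ' _ (mul_pos ht he)).comp t (hasDerivAt_mul_const e)).congr_deriv (mul_comm _ _)

theorem mul_deriv_comp_mul_le (hmono : MonotoneOn φ' (Ioi 0)) (hs : 0 < s) (hst : s ≤ t)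
    (he : 0 ≤ e) : e * φ' (s * e) ≤ e * φ' (t * e) := by
  rcases he.eq_or_lt with rfl | he
  · simp
  · exact mul_le_mul_of_nonneg_left
      (hmono (mul_pos hs he) (mul_pos (hs.trans_le hst) he) (mul_le_mul_of_nonneg_right hst he.le))
      he.le

theorem mul_deriv_comp_mul_lt (hmono : StrictMonoOn φ' (Ioi 0)) (hs : 0 < s) (hst : s < t)
    (he : 0 < e) : e * φ' (s * e) < e * φ' (t * e) :=
  mul_lt_mul_of_pos_left
    (hmono (mul_pos hs he) (mul_pos (hs.trans hst) he) (mul_lt_mul_of_pos_right hst he)) he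

theorem add_mul_sub_le_comp_mul (hφ' : ∀ y, 0 < y → HasDerivAt φ (φ' y) y)
    (hmono : MonotoneOn φ' (Ioi 0)) (hs : 0 < s) (ht : 0 < t) (he : 0 ≤ e) :
    φ (t * e) + e * φ' (t * e) * (s - t) ≤ φ (s * e) :=
  MonotoneOn.add_mul_sub_le_of_hasDerivAt (f := fun s => φ (s * e)) (convex_Ioi 0) isOpen_Ioi
    (fun _ hr => hasDerivAt_comp_mul hφ' hr he)
    (fun _ hr _ _ hrr' => mul_deriv_comp_mul_le hmono hr hrr' he) ht hs

theorem integrable_mul_deriv_comp_mul (hφ' : ∀ y, 0 < y → HasDerivAt φ (φ' y) y)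
    (hmono : MonotoneOn φ' (Ioi 0)) (hη : Measurable η) (hη0 : ∀ ω, 0 ≤ η ω)
    (hint : ∀ t, 0 < t → Integrable (fun ω => φ (t * η ω)) P) (ht : 0 < t) :
    Integrable (fun ω => η ω * φ' (t * η ω)) P := by
  -- `φ'` need not be measurable, but `deriv φ` is, and the two agree on `(0, ∞)`.
  have hderiv : (fun ω => η ω * φ' (t * η ω)) = fun ω => η ω * deriv φ (t * η ω) := by
    funext ω
    rcases (hη0 ω).eq_or_lt with h | h
    · simp [← h]
    · rw [(hφ' _ (mul_pos ht h)).deriv]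
  -- Tangent lines at `tη` squeeze `ηφ'(tη)` between difference quotients through `tη/2`, `2tη`.
  refine integrable_of_le_of_le (g₁ := fun ω => 2 / t * (φ (t * η ω) - φ (t / 2 * η ω)))
    (g₂ := fun ω => t⁻¹ * (φ (2 * t * η ω) - φ (t * η ω))) ?_ (ae_of_all _ fun ω => ?_)
    (ae_of_all _ fun ω => ?_) (((hint t ht).sub (hint _ (half_pos ht))).const_mul _)
    (((hint _ (by positivity)).sub (hint t ht)).const_mul _)
  · rw [hderiv]
    exact (hη.mul ((measurable_deriv φ).comp (hη.const_mul t))).aestronglyMeasurable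
  · have := add_mul_sub_le_comp_mul hφ' hmono (half_pos ht) ht (hη0 ω)
    calc 2 / t * (φ (t * η ω) - φ (t / 2 * η ω))
        ≤ 2 / t * (η ω * φ' (t * η ω) * (t / 2)) := by gcongr; linarith
      _ = η ω * φ' (t * η ω) := by field_simp
  · have := add_mul_sub_le_comp_mul hφ' hmono (by positivity : 0 < 2 * t) ht (hη0 ω)
    calc η ω * φ' (t * η ω) = t⁻¹ * (η ω * φ' (t * η ω) * (2 * t - t)) := by field_simp; ring
      _ ≤ t⁻¹ * (φ (2 * t * η ω) - φ (t * η ω)) := by gcongr; linarith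

theorem hasDerivAt_integral_comp_mul (hφ' : ∀ y, 0 < y → HasDerivAt φ (φ' y) y)
    (hmono : MonotoneOn φ' (Ioi 0)) (hη : Measurable η) (hη0 : ∀ ω, 0 ≤ η ω)
    (hint : ∀ t, 0 < t → Integrable (fun ω => φ (t * η ω)) P) (ht : 0 < t) :
    HasDerivAt (fun s => ∫ ω, φ (s * η ω) ∂P) (∫ ω, η ω * φ' (t * η ω) ∂P) t := by
  have hball : ∀ s ∈ Metric.ball t (t / 2), t / 2 ≤ s ∧ s ≤ 2 * t := fun s hs => by
    rw [Real.ball_eq_Ioo] at hs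
    constructor <;> linarith [hs.1, hs.2]
  refine (hasDerivAt_integral_of_dominated_loc_of_deriv_le (F := fun s ω => φ (s * η ω))
    (F' := fun s ω => η ω * φ' (s * η ω))
    (bound := fun ω => |η ω * φ' (t / 2 * η ω)| + |η ω * φ' (2 * t * η ω)|)
    (Metric.ball_mem_nhds t (half_pos ht)) ?_ (hint t ht)
    (integrable_mul_deriv_comp_mul hφ' hmono hη hη0 hint ht).aestronglyMeasurable
    (ae_of_all _ fun ω s hs => ?_) ?_ (ae_of_all _ fun ω s hs => ?_)).2
  · filter_upwards [lt_mem_nhds ht] with s hs using (hint s hs).aestronglyMeasurable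
  · obtain ⟨hs1, hs2⟩ := hball s hs
    rw [Real.norm_eq_abs]
    exact (abs_le_max_abs_abs (mul_deriv_comp_mul_le hmono (half_pos ht) hs1 (hη0 ω))
      (mul_deriv_comp_mul_le hmono (by linarith) hs2 (hη0 ω))).trans
      (max_le_add_of_nonneg (abs_nonneg _) (abs_nonneg _))
  · exact ((integrable_mul_deriv_comp_mul hφ' hmono hη hη0 hint (half_pos ht)).abs).add
      (integrable_mul_deriv_comp_mul hφ' hmono hη hη0 hint (by positivity)).abs
  · exact hasDerivAt_comp_mul hφ' (by linarith [hball s hs]) (hη0 ω)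

theorem strictMonoOn_integral_mul_deriv_comp_mul (hφ' : ∀ y, 0 < y → HasDerivAt φ (φ' y) y)
    (hmono : StrictMonoOn φ' (Ioi 0)) (hη : Measurable η) (hη0 : ∀ ω, 0 ≤ η ω)
    (hηint : Integrable η P) (hηpos : 0 < ∫ ω, η ω ∂P)
    (hint : ∀ t, 0 < t → Integrable (fun ω => φ (t * η ω)) P) :
    StrictMonoOn (fun t => ∫ ω, η ω * φ' (t * η ω) ∂P) (Ioi 0) := by
  intro s hs t ht hst
  have hs_int := integrable_mul_deriv_comp_mul hφ' hmono.monotoneOn hη hη0 hint hs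
  have ht_int := integrable_mul_deriv_comp_mul hφ' hmono.monotoneOn hη hη0 hint ht
  have hsupp : 0 < P (Function.support η) :=
    (integral_pos_iff_support_of_nonneg hη0 hηint).1 hηpos
  rw [← sub_pos, ← integral_sub ht_int hs_int]
  refine (integral_pos_iff_support_of_nonneg_ae (ae_of_all _ fun ω => ?_)
    (ht_int.sub hs_int)).2 (hsupp.trans_le (measure_mono fun ω hω => ?_))
  · exact sub_nonneg.2 (mul_deriv_comp_mul_le hmono.monotoneOn hs hst.le (hη0 ω))
  · exact (sub_pos.2 (mul_deriv_comp_mul_lt hmono hs hst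
      ((hη0 ω).lt_of_ne (Ne.symm hω)))).ne'

theorem exists_add_integral_mul_deriv_comp_mul_neg (hφ' : ∀ y, 0 < y → HasDerivAt φ (φ' y) y)
    (hmono : MonotoneOn φ' (Ioi 0)) (hbot : Tendsto φ' (𝓝[>] 0) atBot) (hη : Measurable η)
    (hη0 : ∀ ω, 0 ≤ η ω) (hηint : Integrable η P) (hηpos : 0 < ∫ ω, η ω ∂P)
    (hint : ∀ t, 0 < t → Integrable (fun ω => φ (t * η ω)) P) (c : ℝ) :
    ∃ t, 0 < t ∧ c + ∫ ω, η ω * φ' (t * η ω) ∂P < 0 := by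
  set M := c / ∫ ω, η ω ∂P + 1
  have hM : c < ∫ ω, M * η ω ∂P := by
    rw [integral_const_mul, add_mul, div_mul_cancel₀ _ hηpos.ne']
    linarith
  have hle : ∀ ω, ∀ᶠ n : ℕ in atTop, M * η ω ≤ -(η ω * φ' (1 / ((n : ℝ) + 1) * η ω)) := by
    intro ω
    rcases (hη0 ω).eq_or_lt with h | h
    · simp [← h]
    have hlim : Tendsto (fun n : ℕ => 1 / ((n : ℝ) + 1) * η ω) atTop (𝓝[>] 0) := by
      refine tendsto_nhdsWithin_iff.2 ⟨?_, Eventually.of_forall fun n => ?_⟩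
      · simpa using tendsto_one_div_add_atTop_nhds_zero_nat.mul_const (η ω)
      · exact mul_pos Nat.one_div_pos_of_nat h
    filter_upwards [(tendsto_atBot.1 (hbot.comp hlim)) (-M)]
      with n (hn : φ' (1 / ((n : ℝ) + 1) * η ω) ≤ -M)
    nlinarith [mul_le_mul_of_nonneg_left hn h.le]
  obtain ⟨n, hn⟩ := exists_lt_integral_of_monotone
    (f := fun n ω => -(η ω * φ' (1 / ((n : ℝ) + 1) * η ω)))
    (fun n => (integrable_mul_deriv_comp_mul hφ' hmono hη hη0 hint Nat.one_div_pos_of_nat).neg)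
    (hηint.const_mul M)
    (fun ω n k hnk => neg_le_neg (mul_deriv_comp_mul_le hmono Nat.one_div_pos_of_nat
      (Nat.one_div_le_one_div hnk) (hη0 ω)))
    hle hM
  refine ⟨1 / ((n : ℝ) + 1), Nat.one_div_pos_of_nat, ?_⟩
  rw [integral_neg] at hn
  linarith

theorem exists_add_integral_mul_deriv_comp_mul_pos (hφ' : ∀ y, 0 < y → HasDerivAt φ (φ' y) y)
    (hmono : MonotoneOn φ' (Ioi 0)) {b c : ℝ} (hb : ∀ᶠ y in atTop, -b ≤ φ' y) (hη : Measurable η)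
    (hη0 : ∀ ω, 0 ≤ η ω) (hηint : Integrable η P)
    (hint : ∀ t, 0 < t → Integrable (fun ω => φ (t * η ω)) P) (hbc : b * ∫ ω, η ω ∂P < c) :
    ∃ t, 0 < t ∧ 0 < c + ∫ ω, η ω * φ' (t * η ω) ∂P := by
  have hb' : -c < ∫ ω, -b * η ω ∂P := by
    rw [integral_const_mul]
    linarith
  have hle : ∀ ω, ∀ᶠ n : ℕ in atTop, -b * η ω ≤ η ω * φ' (((n : ℝ) + 1) * η ω) := by
    intro ω
    rcases (hη0 ω).eq_or_lt with h | h
    · simp [← h]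
    have hlim : Tendsto (fun n : ℕ => ((n : ℝ) + 1) * η ω) atTop atTop :=
      (tendsto_natCast_atTop_atTop.atTop_add tendsto_const_nhds).atTop_mul_const h
    filter_upwards [hlim.eventually hb] with n hn
    nlinarith [mul_le_mul_of_nonneg_left hn h.le]
  obtain ⟨n, hn⟩ := exists_lt_integral_of_monotone
    (f := fun n ω => η ω * φ' (((n : ℝ) + 1) * η ω))
    (fun n => integrable_mul_deriv_comp_mul hφ' hmono hη hη0 hint n.cast_add_one_pos)
    (hηint.const_mul (-b))
    (fun ω n k hnk => mul_deriv_comp_mul_le hmono n.cast_add_one_pos (by gcongr) (hη0 ω))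
    hle hb'
  exact ⟨(n : ℝ) + 1, n.cast_add_one_pos, by linarith⟩

end Minimization

section CriticalPoint

variable {f f' : ℝ → ℝ}

theorem exists_pos_deriv_eq_zero (hf : ∀ x, 0 < x → HasDerivAt f (f' x) x)
    (hmono : StrictMonoOn f' (Ioi 0)) {s t : ℝ} (hs : 0 < s) (ht : 0 < t) (hfs : f' s < 0)
    (hft : 0 < f' t) : ∃ l, 0 < l ∧ f' l = 0 := by
  have hst : s ≤ t := ((hmono.lt_iff_lt hs ht).1 (hfs.trans hft)).le
  obtain ⟨l, hl, hfl⟩ := exists_hasDerivWithinAt_eq_of_gt_of_lt hst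
    (fun x hx => (hf x (hs.trans_le hx.1)).hasDerivWithinAt) hfs hft
  exact ⟨l, hs.trans hl.1, hfl⟩

theorem lt_of_deriv_eq_zero_of_strictMonoOn (hf : ∀ x, 0 < x → HasDerivAt f (f' x) x)
    (hmono : StrictMonoOn f' (Ioi 0)) {l t : ℝ} (hl : 0 < l) (hfl : f' l = 0) (ht : 0 < t)
    (htl : t ≠ l) : f l < f t := by
  have hcont : ContinuousOn f (Ioi 0) := fun x hx => (hf x hx).continuousAt.continuousWithinAt
  rcases htl.lt_or_gt with htl | hlt
  · refine strictAntiOn_of_hasDerivWithinAt_neg (f' := f') (convex_Ioc 0 l)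
      (hcont.mono Ioc_subset_Ioi_self) (fun x hx => ?_) (fun x hx => ?_) ⟨ht, htl.le⟩
      ⟨hl, le_rfl⟩ htl <;> rw [interior_Ioc] at hx
    · exact (hf x hx.1).hasDerivWithinAt
    · exact hfl ▸ hmono hx.1 hl hx.2
  · refine strictMonoOn_of_hasDerivWithinAt_pos (f' := f') (convex_Ici l)
      (hcont.mono (Ici_subset_Ioi.2 hl)) (fun x hx => ?_) (fun x hx => ?_) self_mem_Ici hlt.le
      hlt <;> rw [interior_Ici] at hx
    · exact (hf x (hl.trans hx)).hasDerivWithinAt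
    · exact hfl ▸ hmono hl (hl.trans hx) hx

end CriticalPoint

theorem exists_critical_point_integral_comp_mul {Ω : Type*} [MeasurableSpace Ω] {P : Measure Ω}
    {φ φ' : ℝ → ℝ} {η : Ω → ℝ} (hφ' : ∀ y, 0 < y → HasDerivAt φ (φ' y) y)
    (hmono : StrictMonoOn φ' (Ioi 0)) (hbot : Tendsto φ' (𝓝[>] 0) atBot) {b c : ℝ}
    (hb : ∀ᶠ y in atTop, -b ≤ φ' y) (hη : Measurable η) (hη0 : ∀ ω, 0 ≤ η ω)
    (hηint : Integrable η P) (hηpos : 0 < ∫ ω, η ω ∂P)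
    (hint : ∀ t, 0 < t → Integrable (fun ω => φ (t * η ω)) P) (hbc : b * ∫ ω, η ω ∂P < c) :
    ∃ l, 0 < l ∧ c + ∫ ω, η ω * φ' (l * η ω) ∂P = 0 ∧
      (∀ t, 0 < t → l * c + ∫ ω, φ (l * η ω) ∂P ≤ t * c + ∫ ω, φ (t * η ω) ∂P) ∧
      (∀ t, 0 < t → t * c + ∫ ω, φ (t * η ω) ∂P ≤ l * c + ∫ ω, φ (l * η ω) ∂P → t = l) ∧
      ∀ t, 0 < t → c + ∫ ω, η ω * φ' (t * η ω) ∂P = 0 → t = l := by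
  set G := fun t => c + ∫ ω, η ω * φ' (t * η ω) ∂P
  have hG : StrictMonoOn G (Ioi 0) := fun s hs t ht hst => add_lt_add_right
    (strictMonoOn_integral_mul_deriv_comp_mul hφ' hmono hη hη0 hηint hηpos hint hs ht hst) c
  have hF : ∀ t, 0 < t → HasDerivAt (fun t => t * c + ∫ ω, φ (t * η ω) ∂P) (G t) t :=
    fun t ht => (hasDerivAt_mul_const c).add
      (hasDerivAt_integral_comp_mul hφ' hmono.monotoneOn hη hη0 hint ht)
  obtain ⟨s, hs, hGs⟩ := exists_add_integral_mul_deriv_comp_mul_neg hφ' hmono.monotoneOn hbot hη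
    hη0 hηint hηpos hint c
  obtain ⟨t, ht, hGt⟩ := exists_add_integral_mul_deriv_comp_mul_pos hφ' hmono.monotoneOn hb hη
    hη0 hηint hint hbc
  obtain ⟨l, hl, hGl⟩ := exists_pos_deriv_eq_zero hF hG hs ht hGs hGt
  have hlt := fun t (ht : 0 < t) (htl : t ≠ l) =>
    lt_of_deriv_eq_zero_of_strictMonoOn hF hG hl hGl ht htl
  refine ⟨l, hl, hGl, fun t ht => ?_,
    fun t ht hle => by_contra fun htl => (hlt t ht htl).not_ge hle,
    fun t ht hGt => hG.injOn ht hl (hGt.trans hGl.symm)⟩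
  rcases eq_or_ne t l with rfl | htl
  · exact le_rfl
  · exact (hlt t ht htl).le

def convexConj (u : ℝ → EReal) (y : ℝ) : EReal := ⨆ x : ℝ, (u x - ((x * y : ℝ) : EReal))

structure IsInadaUtility (a : EReal) (u : ℝ → EReal) (du : ℝ → ℝ) : Prop where
  neg : a < 0
  ne_top : ∀ x : ℝ, u x ≠ ⊤
  eq_bot : ∀ x : ℝ, (x : EReal) < a → u x = ⊥
  ne_bot : ∀ x : ℝ, a < (x : EReal) → u x ≠ ⊥
  mono : Monotone u
  hasDerivAt : ∀ x : ℝ, a < (x : EReal) → HasDerivAt (fun t : ℝ => (u t).toReal) (du x) x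
  continuousOn_deriv : ContinuousOn du {x : ℝ | a < (x : EReal)}
  deriv_pos : ∀ x : ℝ, a < (x : EReal) → 0 < du x
  strictAntiOn_deriv : StrictAntiOn du {x : ℝ | a < (x : EReal)}
  deriv_unbounded : ∀ M : ℝ, ∃ x : ℝ, a < (x : EReal) ∧ M ≤ du x
  tendsto_deriv_atTop : Tendsto du atTop (𝓝 0)

namespace IsInadaUtility

variable {a : EReal} {u : ℝ → EReal} {du : ℝ → ℝ} {DPhi : ℝ → ℝ} {x y : ℝ}

theorem lt_coe_of_nonneg (hu : IsInadaUtility a u du) (hx : 0 ≤ x) : a < x :=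
  hu.neg.trans_le (EReal.coe_nonneg.2 hx)

theorem exists_deriv_eq (hu : IsInadaUtility a u du) (hy : 0 < y) :
    ∃ x : ℝ, a < x ∧ du x = y := by
  obtain ⟨x₀, hx₀, hy₀⟩ := hu.deriv_unbounded y
  obtain ⟨x₁, hy₁, hx₀₁⟩ :=
    ((hu.tendsto_deriv_atTop.eventually (gt_mem_nhds hy)).and (eventually_ge_atTop x₀)).exists
  have hsub : Icc x₀ x₁ ⊆ {x : ℝ | a < (x : EReal)} :=
    fun x hx => hx₀.trans_le (EReal.coe_le_coe_iff.2 hx.1)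
  obtain ⟨x, hx, hxy⟩ :=
    intermediate_value_Icc' hx₀₁ (hu.continuousOn_deriv.mono hsub) ⟨hy₁.le, hy₀⟩
  exact ⟨x, hsub hx, hxy⟩

theorem toReal_le_tangent (hu : IsInadaUtility a u du) {x₀ : ℝ} (hx₀ : a < x₀) (hx : u x ≠ ⊥) :
    (u x).toReal ≤ (u x₀).toReal + du x₀ * (x - x₀) := by
  set D := {x : ℝ | a < (x : EReal)}
  have hDo : IsOpen D := isOpen_lt continuous_const continuous_coe_real_ereal
  have hDc : Convex ℝ D :=
    (⟨fun _ hx _ _ _ hz => hx.trans_le (EReal.coe_le_coe_iff.2 hz.1)⟩ : D.OrdConnected).convex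
  have htangent : ∀ z ∈ D, (u z).toReal ≤ (u x₀).toReal + du x₀ * (z - x₀) := fun z hz => by
    have := MonotoneOn.add_mul_sub_le_of_hasDerivAt (f := fun t => -(u t).toReal)
      (f' := fun t => -du t) hDc hDo (fun t ht => (hu.hasDerivAt t ht).neg)
      (fun _ hs _ ht hst => neg_le_neg (hu.strictAntiOn_deriv.antitoneOn hs ht hst)) hx₀ hz
    linarith
  -- `x` may be the endpoint `a`, where `u` need not be differentiable: approach it from the right.
  have hax : a ≤ x := not_lt.1 fun h => hx (hu.eq_bot x h)
  refine ge_of_tendsto (tendsto_nhdsWithin_of_tendsto_nhds (s := Ioi x)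
    ((by fun_prop : Continuous fun z => (u x₀).toReal + du x₀ * (z - x₀)).tendsto x)) ?_
  filter_upwards [self_mem_nhdsWithin] with z (hz : x < z)
  exact (EReal.toReal_le_toReal (hu.mono hz.le) hx (hu.ne_top z)).trans
    (htangent z (hax.trans_lt (EReal.coe_lt_coe_iff.2 hz)))

theorem convexConj_deriv_eq (hu : IsInadaUtility a u du) (hx : a < x) :
    convexConj u (du x) = (((u x).toReal - x * du x : ℝ) : EReal) := by
  rw [convexConj]
  refine le_antisymm (iSup_le fun z => ?_) (le_iSup_of_le x ?_)
  · by_cases hz : u z = ⊥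
    · simp [hz]
    · rw [← EReal.coe_toReal (hu.ne_top z) hz, ← EReal.coe_sub, EReal.coe_le_coe_iff]
      linarith [hu.toReal_le_tangent hx hz]
  · rw [EReal.coe_sub, EReal.coe_toReal (hu.ne_top x) (hu.ne_bot x hx)]

theorem coe_toReal_convexConj (hu : IsInadaUtility a u du) (hy : 0 < y) :
    ((convexConj u y).toReal : EReal) = convexConj u y := by
  obtain ⟨x, hx, rfl⟩ := hu.exists_deriv_eq hy
  rw [hu.convexConj_deriv_eq hx, EReal.toReal_coe]

theorem coe_toReal_le_convexConj (hu : IsInadaUtility a u du) (y : ℝ) :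
    (((u 0).toReal : ℝ) : EReal) ≤ convexConj u y := by
  rw [EReal.coe_toReal (hu.ne_top 0) (hu.ne_bot 0 (hu.lt_coe_of_nonneg le_rfl)), convexConj]
  exact le_iSup_of_le 0 (by simp)

theorem eq_neg_of_hasDerivAt_convexConj (hu : IsInadaUtility a u du) (hx : a < x) {d : ℝ}
    (hd : HasDerivAt (fun y => (convexConj u y).toReal) d (du x)) : d = -x := by
  have hmin : IsLocalMin (fun y => (convexConj u y).toReal + x * y) (du x) := by
    filter_upwards [lt_mem_nhds (hu.deriv_pos x hx)] with y hy
    obtain ⟨z, hz, rfl⟩ := hu.exists_deriv_eq hy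
    simp only [hu.convexConj_deriv_eq hx, hu.convexConj_deriv_eq hz, EReal.toReal_coe]
    linarith [hu.toReal_le_tangent hz (hu.ne_bot x hx)]
  linarith [hmin.hasDerivAt_eq_zero (hd.add ((hasDerivAt_id (du x)).const_mul x))]

theorem exists_deriv_eq_and_eq_neg (hu : IsInadaUtility a u du)
    (hDPhi : ∀ y : ℝ, 0 < y → HasDerivAt (fun t : ℝ => (convexConj u t).toReal) (DPhi y) y)
    (hy : 0 < y) :
    ∃ x : ℝ, a < x ∧ du x = y ∧ DPhi y = -x := by
  obtain ⟨x, hx, rfl⟩ := hu.exists_deriv_eq hy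
  exact ⟨x, hx, rfl, hu.eq_neg_of_hasDerivAt_convexConj hx (hDPhi _ hy)⟩

theorem strictMonoOn_deriv_convexConj (hu : IsInadaUtility a u du)
    (hDPhi : ∀ y : ℝ, 0 < y → HasDerivAt (fun t : ℝ => (convexConj u t).toReal) (DPhi y) y) :
    StrictMonoOn DPhi (Ioi 0) := by
  intro y₁ hy₁ y₂ hy₂ h
  obtain ⟨x₁, hx₁, rfl, h₁⟩ := hu.exists_deriv_eq_and_eq_neg hDPhi hy₁
  obtain ⟨x₂, hx₂, rfl, h₂⟩ := hu.exists_deriv_eq_and_eq_neg hDPhi hy₂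
  rw [h₁, h₂, neg_lt_neg_iff]
  exact (hu.strictAntiOn_deriv.lt_iff_gt hx₁ hx₂).1 h

theorem eventually_neg_le_deriv_convexConj (hu : IsInadaUtility a u du)
    (hDPhi : ∀ y : ℝ, 0 < y → HasDerivAt (fun t : ℝ => (convexConj u t).toReal) (DPhi y) y) {b : ℝ}
    (hb : a < b) : ∀ᶠ y in atTop, -b ≤ DPhi y := by
  filter_upwards [eventually_ge_atTop (du b)] with y hy
  obtain ⟨x, hx, rfl, hxy⟩ :=
    hu.exists_deriv_eq_and_eq_neg hDPhi ((hu.deriv_pos b hb).trans_le hy)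
  rw [hxy, neg_le_neg_iff]
  exact (hu.strictAntiOn_deriv.le_iff_ge hb hx).1 hy

theorem tendsto_deriv_convexConj_nhdsGT_zero (hu : IsInadaUtility a u du)
    (hDPhi : ∀ y : ℝ, 0 < y → HasDerivAt (fun t : ℝ => (convexConj u t).toReal) (DPhi y) y) :
    Tendsto DPhi (𝓝[>] 0) atBot := by
  refine tendsto_atBot.2 fun M => ?_
  have hb : a < ((max (-M) 0 : ℝ) : EReal) := hu.lt_coe_of_nonneg (le_max_right _ _)
  filter_upwards [Ioo_mem_nhdsGT (hu.deriv_pos _ hb)] with y hy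
  obtain ⟨x, hx, rfl, hxy⟩ := hu.exists_deriv_eq_and_eq_neg hDPhi hy.1
  have := (hu.strictAntiOn_deriv.lt_iff_gt hx hb).1 hy.2
  rw [hxy]
  linarith [le_max_left (-M) 0]

theorem integrable_and_ewp_convexConj_comp {Ω : Type*} [MeasurableSpace Ω] {P : Measure Ω}
    [IsFiniteMeasure P] (hu : IsInadaUtility a u du)
    (hDPhi : ∀ y : ℝ, 0 < y → HasDerivAt (fun t : ℝ => (convexConj u t).toReal) (DPhi y) y)
    {g : Ω → ℝ} (hg : Measurable g) (hg0 : ∀ ω, 0 ≤ g ω)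
    (hfin : ∫⁻ ω, (convexConj u (g ω)).toENN ∂P < ⊤) :
    Integrable (fun ω => (convexConj u (g ω)).toReal) P ∧
      ewp P (fun ω => convexConj u (g ω)) =
        ((∫ ω, (convexConj u (g ω)).toReal ∂P : ℝ) : EReal) := by
  have hmeas : Measurable fun ω => convexConj u (g ω) := by
    refine measurable_comp_of_continuousOn_Ioi ?_ hg hg0
    exact (continuous_coe_real_ereal.comp_continuousOn fun y hy =>
      (hDPhi y hy).continuousAt.continuousWithinAt).congr fun y hy =>
        (hu.coe_toReal_convexConj hy).symm
  exact ⟨integrable_toReal_of_lintegral_toENN_lt_top hmeas (fun _ => hu.coe_toReal_le_convexConj _)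
    hfin, ewp_eq_integral_toReal hmeas (fun _ => hu.coe_toReal_le_convexConj _) hfin⟩

end IsInadaUtility

theorem statement9_general
    {Ω : Type*} [MeasurableSpace Ω] (P : Measure Ω) [IsProbabilityMeasure P]
    (a : EReal) (ha : a < 0)
    (u : ℝ → EReal)
    (hu_ne_top : ∀ x : ℝ, u x ≠ ⊤)
    (hu_bot : ∀ x : ℝ, (x : EReal) < a → u x = ⊥)
    (hu_fin : ∀ x : ℝ, a < (x : EReal) → u x ≠ ⊥)
    (hu_mono : Monotone u)
    (du : ℝ → ℝ)
    (hdu : ∀ x : ℝ, a < (x : EReal) → HasDerivAt (fun t : ℝ => (u t).toReal) (du x) x)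
    (hdu_cont : ContinuousOn du {x : ℝ | a < (x : EReal)})
    (hdu_pos : ∀ x : ℝ, a < (x : EReal) → 0 < du x)
    (hdu_anti : StrictAntiOn du {x : ℝ | a < (x : EReal)})
    (hdu_inada_top : ∀ M : ℝ, ∃ x : ℝ, a < (x : EReal) ∧ M ≤ du x)
    (hdu_inada_zero : Tendsto du atTop (𝓝 0))
    (Phi : ℝ → EReal)
    (hPhi : ∀ y : ℝ, Phi y = ⨆ x : ℝ, (u x - ((x * y : ℝ) : EReal)))
    (hA2 : ∀ g : Ω → ℝ, Measurable g → (∀ ω, 0 ≤ g ω) →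
      ∫⁻ ω, (Phi (g ω)).toENN ∂P < ⊤ →
      ∀ l : ℝ, 0 < l → ∫⁻ ω, (Phi (l * g ω)).toENN ∂P < ⊤)
    (DPhi : ℝ → ℝ)
    (hDPhi : ∀ y : ℝ, 0 < y → HasDerivAt (fun t : ℝ => (Phi t).toReal) (DPhi y) y)
    -- `η ∈ L_Φ` with `0 < E[η] ≤ 1`
    (eta : Ω → ℝ) (heta_meas : Measurable eta) (heta_nonneg : ∀ ω, 0 ≤ eta ω)
    (hetaPhi : ∫⁻ ω, (Phi (eta ω)).toENN ∂P < ⊤)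
    (hmean_pos : 0 < ∫⁻ ω, ENNReal.ofReal (eta ω) ∂P)
    (hmean_le : ∫⁻ ω, ENNReal.ofReal (eta ω) ∂P ≤ 1)
    -- `c > a·E[η]` (no restriction when `a = -∞`)
    (c : ℝ) (hc : a * ((∫⁻ ω, ENNReal.ofReal (eta ω) ∂P : ℝ≥0∞) : EReal) < (c : EReal)) :
    ∃ l : ℝ, 0 < l ∧
      -- `l` minimizes `λ ↦ λc + E[Φ(λη)]` over `(0, ∞)` …
      (∀ t : ℝ, 0 < t →
        ((l * c : ℝ) : EReal) + ewp P (fun ω => Phi (l * eta ω)) ≤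
          ((t * c : ℝ) : EReal) + ewp P (fun ω => Phi (t * eta ω))) ∧
      -- … and it is the unique such minimizer …
      (∀ t : ℝ, 0 < t →
        (∀ s : ℝ, 0 < s →
          ((t * c : ℝ) : EReal) + ewp P (fun ω => Phi (t * eta ω)) ≤
            ((s * c : ℝ) : EReal) + ewp P (fun ω => Phi (s * eta ω))) → t = l) ∧
      -- … it solves the first-order condition `c + E[η·Φ'(lη)] = 0` …
      Integrable (fun ω => if eta ω = 0 then 0 else eta ω * DPhi (l * eta ω)) P ∧
      c + ∫ ω, (if eta ω = 0 then 0 else eta ω * DPhi (l * eta ω)) ∂P = 0 ∧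
      -- … and it is the unique positive solution of this condition
      (∀ t : ℝ, 0 < t →
        Integrable (fun ω => if eta ω = 0 then 0 else eta ω * DPhi (t * eta ω)) P →
        c + ∫ ω, (if eta ω = 0 then 0 else eta ω * DPhi (t * eta ω)) ∂P = 0 → t = l) := by
  have hu : IsInadaUtility a u du := ⟨ha, hu_ne_top, hu_bot, hu_fin, hu_mono, hdu, hdu_cont,
    hdu_pos, hdu_anti, hdu_inada_top, hdu_inada_zero⟩
  obtain rfl : Phi = convexConj u := funext hPhi
  have hmono := hu.strictMonoOn_deriv_convexConj hDPhi
  have hcomp := fun t (ht : 0 < t) => hu.integrable_and_ewp_convexConj_comp (P := P) hDPhi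
    (heta_meas.const_mul t) (fun ω => mul_nonneg ht.le (heta_nonneg ω))
    (hA2 eta heta_meas heta_nonneg hetaPhi t ht)
  have hηint : Integrable eta P := (lintegral_ofReal_ne_top_iff_integrable
    heta_meas.aestronglyMeasurable (ae_of_all _ heta_nonneg)).1
      (hmean_le.trans_lt ENNReal.one_lt_top).ne
  have hmean : ∫⁻ ω, ENNReal.ofReal (eta ω) ∂P = ENNReal.ofReal (∫ ω, eta ω ∂P) :=
    (ofReal_integral_eq_lintegral_ofReal hηint (ae_of_all _ heta_nonneg)).symm
  have hηpos : 0 < ∫ ω, eta ω ∂P := ENNReal.ofReal_pos.1 (hmean ▸ hmean_pos)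
  rw [hmean, EReal.coe_ennreal_ofReal, max_eq_left hηpos.le] at hc
  obtain ⟨b, hab, hbc⟩ := EReal.exists_gt_coe_mul_lt hηpos hc
  obtain ⟨l, hl, hroot, hmin, hmin_uniq, huniq⟩ := exists_critical_point_integral_comp_mul hDPhi
    hmono (hu.tendsto_deriv_convexConj_nhdsGT_zero hDPhi)
    (hu.eventually_neg_le_deriv_convexConj hDPhi hab) heta_meas heta_nonneg hηint hηpos
    (fun t ht => (hcomp t ht).1) hbc
  simp only [ite_zero_else_mul]
  refine ⟨l, hl, fun t ht => ?_, fun t ht hlt => hmin_uniq t ht ?_, integrable_mul_deriv_comp_mul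
    hDPhi hmono.monotoneOn heta_meas heta_nonneg (fun t ht => (hcomp t ht).1) hl, hroot,
    fun t ht _ => huniq t ht⟩
  · rw [(hcomp t ht).2, (hcomp l hl).2]
    exact_mod_cast hmin t ht
  · have := hlt l hl
    rw [(hcomp t ht).2, (hcomp l hl).2] at this
    exact_mod_cast this

/-- Proposition 26, first part.  Assume (A1), (A2).  Let `η ≥ 0` with
`E[Φ(η)] < ∞`, `0 < E[η] ≤ 1`, and `c > a·E[η]`.  Then `λ ↦ λc + E[Φ(λη)]` attains its
minimum over `(0, ∞)` at a unique point `λ(c; η) > 0`, which is the unique positive solution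
of the first-order condition `c + E[η·Φ'(λη)] = 0` (with `0·Φ'(0) := 0` on `{η = 0}`). -/
theorem statement9
    {Ω : Type*} [MeasurableSpace Ω] (P : Measure Ω) [IsProbabilityMeasure P]
    (a : EReal) (ha : a < 0)
    (u : ℝ → EReal)
    (hu_ne_top : ∀ x : ℝ, u x ≠ ⊤)
    (hu_bot : ∀ x : ℝ, (x : EReal) < a → u x = ⊥)
    (hu_fin : ∀ x : ℝ, a < (x : EReal) → u x ≠ ⊥)
    (hu_mono : Monotone u)
    (hu_lim : Tendsto u atBot (𝓝 ⊥))
    (du : ℝ → ℝ)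
    (hdu : ∀ x : ℝ, a < (x : EReal) → HasDerivAt (fun t : ℝ => (u t).toReal) (du x) x)
    (hdu_cont : ContinuousOn du {x : ℝ | a < (x : EReal)})
    (hdu_pos : ∀ x : ℝ, a < (x : EReal) → 0 < du x)
    (hdu_anti : StrictAntiOn du {x : ℝ | a < (x : EReal)})
    (hdu_inada_top : ∀ M : ℝ, ∃ x : ℝ, a < (x : EReal) ∧ M ≤ du x)
    (hdu_inada_zero : Tendsto du atTop (𝓝 0))
    (Phi : ℝ → EReal)
    (hPhi : ∀ y : ℝ, Phi y = ⨆ x : ℝ, (u x - ((x * y : ℝ) : EReal)))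
    (hA2 : ∀ g : Ω → ℝ, Measurable g → (∀ ω, 0 ≤ g ω) →
      ∫⁻ ω, (Phi (g ω)).toENN ∂P < ⊤ →
      ∀ l : ℝ, 0 < l → ∫⁻ ω, (Phi (l * g ω)).toENN ∂P < ⊤)
    (DPhi : ℝ → ℝ)
    (hDPhi : ∀ y : ℝ, 0 < y → HasDerivAt (fun t : ℝ => (Phi t).toReal) (DPhi y) y)
    -- `η ∈ L_Φ` with `0 < E[η] ≤ 1`
    (eta : Ω → ℝ) (heta_meas : Measurable eta) (heta_nonneg : ∀ ω, 0 ≤ eta ω)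
    (hetaPhi : ∫⁻ ω, (Phi (eta ω)).toENN ∂P < ⊤)
    (hmean_pos : 0 < ∫⁻ ω, ENNReal.ofReal (eta ω) ∂P)
    (hmean_le : ∫⁻ ω, ENNReal.ofReal (eta ω) ∂P ≤ 1)
    -- `c > a·E[η]` (no restriction when `a = -∞`)
    (c : ℝ) (hc : a * ((∫⁻ ω, ENNReal.ofReal (eta ω) ∂P : ℝ≥0∞) : EReal) < (c : EReal)) :
    ∃ l : ℝ, 0 < l ∧
      -- `l` minimizes `λ ↦ λc + E[Φ(λη)]` over `(0, ∞)` …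
      (∀ t : ℝ, 0 < t →
        ((l * c : ℝ) : EReal) + ewp P (fun ω => Phi (l * eta ω)) ≤
          ((t * c : ℝ) : EReal) + ewp P (fun ω => Phi (t * eta ω))) ∧
      -- … and it is the unique such minimizer …
      (∀ t : ℝ, 0 < t →
        (∀ s : ℝ, 0 < s →
          ((t * c : ℝ) : EReal) + ewp P (fun ω => Phi (t * eta ω)) ≤
            ((s * c : ℝ) : EReal) + ewp P (fun ω => Phi (s * eta ω))) → t = l) ∧
      -- … it solves the first-order condition `c + E[η·Φ'(lη)] = 0` …
      Integrable (fun ω => if eta ω = 0 then 0 else eta ω * DPhi (l * eta ω)) P ∧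
      c + ∫ ω, (if eta ω = 0 then 0 else eta ω * DPhi (l * eta ω)) ∂P = 0 ∧
      -- … and it is the unique positive solution of this condition
      (∀ t : ℝ, 0 < t →
        Integrable (fun ω => if eta ω = 0 then 0 else eta ω * DPhi (t * eta ω)) P →
        c + ∫ ω, (if eta ω = 0 then 0 else eta ω * DPhi (t * eta ω)) ∂P = 0 → t = l) :=
  statement9_general P a ha u hu_ne_top hu_bot hu_fin hu_mono du hdu hdu_cont hdu_pos hdu_anti
    hdu_inada_top hdu_inada_zero Phi hPhi hA2 DPhi hDPhi eta heta_meas heta_nonneg hetaPhi hmean_pos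
    hmean_le c hc

end
end
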